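/- arXiv:math/0702713 — 11 statements merged into one kernel-verified Lean document; each statement's English description precedes it below -/
import Mathlib

section
/- Let X be a compact, locally connected Hausdorff topological space, f = (f₁,…,f_n) : X → ℝⁿ a continuous function, (l, b) an admissible pair, and g : X → ℝ defined by g(P) = max_{j=1,…,n} (f_j(P) − b_j)/l_j. Then for all s < t, setting u = s·l + b and v = t·l + b, the n-dimensional size function satisfies ℓ_{(X,f)}(u, v) = ℓ_{(X,g)}(s, t); that is, the number of connected components of X⟨f ⪯ v⟩ containing at least one point of X⟨f ⪯ u⟩ equals the number of connected components of {P : g(P) ≤ t} containing at least one point of {P : g(P) ≤ s}. -/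
/-- The number of connected components of the subspace `B ⊆ X` that contain
at least one point of `A`.  When `A ⊆ B`, this is the size function value
`ℓ(A, B)` of Size Theory. -/
noncomputable def sizeCount {X : Type*} [TopologicalSpace X] (A B : Set X) : ℕ :=
  Nat.card {c : ConnectedComponents (↥B) //
    ∃ P : ↥B, ConnectedComponents.mk P = c ∧ (P : X) ∈ A}

/-- Reduction theorem for size functions, [BiCeXX, Thm. 3].
Let `X` be a compact, locally connected Hausdorff space, `f : X → ℝⁿ` continuous,
`(l, b)` an admissible pair and `g(P) = max_j (fⱼ(P) − bⱼ)/lⱼ`.  Then for all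
`s < t`, with `u = s·l + b` and `v = t·l + b`, the `n`-dimensional size function
satisfies `ℓ_{(X,f)}(u, v) = ℓ_{(X,g)}(s, t)`. -/
theorem stmt_2 {X : Type*} [TopologicalSpace X] [CompactSpace X]
    [LocallyConnectedSpace X] [T2Space X]
    {n : ℕ} (hn : 0 < n) (f : X → Fin n → ℝ) (hf : Continuous f)
    (l b : Fin n → ℝ) (hl : ∀ j, 0 < l j) (hlunit : ∑ j, (l j) ^ 2 = 1)
    (hb : ∑ j, b j = 0)
    (g : X → ℝ) (hg : ∀ P, g P = ⨆ j, (f P j - b j) / l j)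
    (s t : ℝ) (hst : s < t) (u v : Fin n → ℝ)
    (hu : ∀ j, u j = s * l j + b j) (hv : ∀ j, v j = t * l j + b j) :
    sizeCount {P : X | ∀ j, f P j ≤ u j} {P : X | ∀ j, f P j ≤ v j} =
      sizeCount {P : X | g P ≤ s} {P : X | g P ≤ t} := by
  have : Nonempty (Fin n) := ⟨⟨0, hn⟩⟩
  have key : ∀ (r : ℝ) (P : X), g P ≤ r ↔ ∀ j, f P j ≤ r * l j + b j := by
    intro r P
    rw [hg, ciSup_le_iff (Set.Finite.bddAbove (Set.finite_range _))]
    constructor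
    · intro h j
      have := h j
      rw [div_le_iff₀ (hl j)] at this
      linarith [this]
    · intro h j
      rw [div_le_iff₀ (hl j)]
      linarith [h j]
  have h1 : {P : X | ∀ j, f P j ≤ u j} = {P : X | g P ≤ s} := by
    ext P; simp only [Set.mem_setOf_eq, key s P, hu]
  have h2 : {P : X | ∀ j, f P j ≤ v j} = {P : X | g P ≤ t} := by
    ext P; simp only [Set.mem_setOf_eq, key t P, hv]
  rw [h1, h2]
end

section
/- Let X be a topological space, f = (f₁,…,f_n) : X → ℝⁿ a continuous function, (l, b) an admissible pair, and g : X → ℝ defined by g(P) = max_{j=1,…,n} (f_j(P) − b_j)/l_j. Fix a field k and an integer i ≥ 0. Then for all s < t, setting u = s·l + b and v = t·l + b, the lower level sets f⁻¹(∏_{j=1}^n (−∞, u_j]) and g⁻¹((−∞, s]) coincide, the lower level sets f⁻¹(∏_{j=1}^n (−∞, v_j]) and g⁻¹((−∞, t]) coincide, and hence the maps induced by inclusion on i-th singular homology with coefficients in k, f_i^{u,v} : H_i(f⁻¹(∏_j (−∞, u_j])) → H_i(f⁻¹(∏_j (−∞, v_j])) and g_i^{s,t} : H_i(g⁻¹((−∞,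 s])) → H_i(g⁻¹((−∞, t])), are equal; in particular their images (the multidimensional and 1-dimensional i-th persistent homology modules) coincide: F_i^{u,v} = G_i^{s,t}. -/
open CategoryTheory AlgebraicTopology

/-- The `i`-th singular homology functor with coefficients in `k`:
the composite of the singular simplicial set functor, the free `k`-module
functor applied levelwise, the alternating face map complex, and the `i`-th
homology of chain complexes. -/
noncomputable def singularHomologyFunctor (k : Type) [CommRing k] (i : ℕ) :
    TopCat ⥤ ModuleCat k :=
  TopCat.toSSet ⋙ ((CategoryTheory.SimplicialObject.whiskering _ _).obj (ModuleCat.free k)) ⋙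
    alternatingFaceMapComplex (ModuleCat k) ⋙
    HomologicalComplex.homologyFunctor (ModuleCat k) (ComplexShape.down ℕ) i

lemma heq_map_aux {X : Type} [TopologicalSpace X] (k : Type) [CommRing k] (i : ℕ)
    {A B A' B' : Set X} (hA : A = A') (hB : B = B') (h1 : A ⊆ B) (h2 : A' ⊆ B') :
    HEq
      ((singularHomologyFunctor k i).map (X := TopCat.of A) (Y := TopCat.of B)
        (TopCat.ofHom ⟨Set.inclusion h1, continuous_inclusion h1⟩))
      ((singularHomologyFunctor k i).map (X := TopCat.of A') (Y := TopCat.of B')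
        (TopCat.ofHom ⟨Set.inclusion h2, continuous_inclusion h2⟩)) := by
  subst hA; subst hB; rfl

lemma heq_range_aux {X : Type} [TopologicalSpace X] (k : Type) [CommRing k] (i : ℕ)
    {A B A' B' : Set X} (hA : A = A') (hB : B = B') (h1 : A ⊆ B) (h2 : A' ⊆ B') :
    HEq
      (LinearMap.range ((singularHomologyFunctor k i).map (X := TopCat.of A) (Y := TopCat.of B)
        (TopCat.ofHom ⟨Set.inclusion h1, continuous_inclusion h1⟩)).hom)
      (LinearMap.range ((singularHomologyFunctor k i).map (X := TopCat.of A') (Y := TopCat.of B')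
        (TopCat.ofHom ⟨Set.inclusion h2, continuous_inclusion h2⟩)).hom) := by
  subst hA; subst hB; rfl

/-- Homological 1-dimensional reduction, Theorem `th:main`.
Let `X` be a topological space, `f : X → ℝⁿ` continuous, `(l, b)` an admissible
pair, `g(P) = max_j (fⱼ(P) − bⱼ)/lⱼ`, `k` a field and `i ≥ 0` a homology degree.
For all `s < t`, with `u = s·l + b` and `v = t·l + b`:
the lower level sets of `f` at `u` resp. `v` coincide with those of `g` at `s`
resp. `t`; hence the maps induced by the inclusions on `i`-th singular homology
with coefficients in `k` are equal, and in particular their images (the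
multidimensional and 1-dimensional `i`-th persistent homology modules) coincide:
`F_i^{u,v} = G_i^{s,t}`. -/
theorem stmt_3 {X : Type} [TopologicalSpace X] {n : ℕ} (hn : 0 < n)
    (k : Type) [Field k] (i : ℕ)
    (f : X → Fin n → ℝ) (hf : Continuous f)
    (l b : Fin n → ℝ) (hl : ∀ j, 0 < l j) (hlunit : ∑ j, (l j) ^ 2 = 1)
    (hb : ∑ j, b j = 0)
    (g : X → ℝ) (hg : ∀ P, g P = ⨆ j, (f P j - b j) / l j)
    (s t : ℝ) (hst : s < t) (u v : Fin n → ℝ)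
    (hu : ∀ j, u j = s * l j + b j) (hv : ∀ j, v j = t * l j + b j)
    (hfuv : {P : X | ∀ j, f P j ≤ u j} ⊆ {P : X | ∀ j, f P j ≤ v j})
    (hgst : {P : X | g P ≤ s} ⊆ {P : X | g P ≤ t}) :
    {P : X | ∀ j, f P j ≤ u j} = {P : X | g P ≤ s} ∧
    {P : X | ∀ j, f P j ≤ v j} = {P : X | g P ≤ t} ∧
    HEq
      ((singularHomologyFunctor k i).map
        (X := TopCat.of {P : X | ∀ j, f P j ≤ u j})
        (Y := TopCat.of {P : X | ∀ j, f P j ≤ v j})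
        (TopCat.ofHom ⟨Set.inclusion hfuv, continuous_inclusion hfuv⟩))
      ((singularHomologyFunctor k i).map
        (X := TopCat.of {P : X | g P ≤ s})
        (Y := TopCat.of {P : X | g P ≤ t})
        (TopCat.ofHom ⟨Set.inclusion hgst, continuous_inclusion hgst⟩)) ∧
    HEq
      (LinearMap.range
        ((singularHomologyFunctor k i).map
          (X := TopCat.of {P : X | ∀ j, f P j ≤ u j})
          (Y := TopCat.of {P : X | ∀ j, f P j ≤ v j})
          (TopCat.ofHom ⟨Set.inclusion hfuv, continuous_inclusion hfuv⟩)).hom)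
      (LinearMap.range
        ((singularHomologyFunctor k i).map
          (X := TopCat.of {P : X | g P ≤ s})
          (Y := TopCat.of {P : X | g P ≤ t})
          (TopCat.ofHom ⟨Set.inclusion hgst, continuous_inclusion hgst⟩)).hom) := by
  haveI : Nonempty (Fin n) := Fin.pos_iff_nonempty.mp hn
  have key : ∀ (r : ℝ) (w : Fin n → ℝ), (∀ j, w j = r * l j + b j) →
      {P : X | ∀ j, f P j ≤ w j} = {P : X | g P ≤ r} := by
    intro r w hw
    ext P
    simp only [Set.mem_setOf_eq, hg]
    rw [ciSup_le_iff (Set.Finite.bddAbove (Set.finite_range _))]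
    constructor
    · intro h j
      rw [div_le_iff₀ (hl j)]
      have := h j
      rw [hw j] at this
      linarith
    · intro h j
      have := h j
      rw [div_le_iff₀ (hl j)] at this
      rw [hw j]
      linarith
  have h1 := key s u hu
  have h2 := key t v hv
  exact ⟨h1, h2, heq_map_aux k i h1 h2 hfuv hgst, heq_range_aux k i h1 h2 hfuv hgst⟩
end

section
/- Let X and Y be compact, locally connected Hausdorff topological spaces and f' : X → ℝⁿ, f'' : Y → ℝⁿ continuous functions. Then the multidimensional size functions coincide, ℓ_{(X,f')}(u,v) = ℓ_{(Y,f'')}(u,v) for all u ≺ v, if and only if for every admissible pair (l, b), the 1-dimensional size functions of g'(P) = max_j (f'_j(P) − b_j)/l_j on X and g''(Q) = max_j (f''_j(Q) − b_j)/l_j on Y satisfy ℓ_{(X,g')}(s,t) = ℓ_{(Y,g'')}(s,t) for all s < t. -/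
lemma levelSet_eq {X : Type*} {n : ℕ} [Nonempty (Fin n)] (f : X → Fin n → ℝ)
    (l b : Fin n → ℝ) (hl : ∀ j, 0 < l j) (s : ℝ) :
    {P : X | (⨆ j, (f P j - b j) / l j) ≤ s} = {P : X | ∀ j, f P j ≤ s * l j + b j} := by
  ext P
  simp only [Set.mem_setOf_eq]
  rw [ciSup_le_iff (Set.finite_range _).bddAbove]
  constructor
  · intro h j
    have := h j
    rw [div_le_iff₀ (hl j)] at this
    linarith
  · intro h j
    rw [div_le_iff₀ (hl j)]
    have := h j
    linarith

/-- analogue of [BiCeXX, Cor. 1] in degree 0.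
Let `X`, `Y` be compact, locally connected Hausdorff spaces and
`f' : X → ℝⁿ`, `f'' : Y → ℝⁿ` continuous.  The multidimensional size
functions of `(X, f')` and `(Y, f'')` coincide on all `u ≺ v` if and only if,
for every admissible pair `(l, b)`, the 1-dimensional size functions of
`g'(P) = max_j (f'ⱼ(P) − bⱼ)/lⱼ` on `X` and `g''(Q) = max_j (f''ⱼ(Q) − bⱼ)/lⱼ`
on `Y` coincide on all `s < t`. -/
theorem stmt_5 {X Y : Type*}
    [TopologicalSpace X] [CompactSpace X] [LocallyConnectedSpace X] [T2Space X]
    [TopologicalSpace Y] [CompactSpace Y] [LocallyConnectedSpace Y] [T2Space Y]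
    {n : ℕ} (hn : 0 < n)
    (f' : X → Fin n → ℝ) (hf' : Continuous f')
    (f'' : Y → Fin n → ℝ) (hf'' : Continuous f'') :
    (∀ u v : Fin n → ℝ, (∀ j, u j < v j) →
        sizeCount {P : X | ∀ j, f' P j ≤ u j} {P : X | ∀ j, f' P j ≤ v j} =
          sizeCount {Q : Y | ∀ j, f'' Q j ≤ u j} {Q : Y | ∀ j, f'' Q j ≤ v j}) ↔
    (∀ l b : Fin n → ℝ, (∀ j, 0 < l j) → (∑ j, (l j) ^ 2 = 1) →
      (∑ j, b j = 0) → ∀ s t : ℝ, s < t →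
        sizeCount {P : X | (⨆ j, (f' P j - b j) / l j) ≤ s}
            {P : X | (⨆ j, (f' P j - b j) / l j) ≤ t} =
          sizeCount {Q : Y | (⨆ j, (f'' Q j - b j) / l j) ≤ s}
            {Q : Y | (⨆ j, (f'' Q j - b j) / l j) ≤ t}) := by
  haveI : Nonempty (Fin n) := Fin.pos_iff_nonempty.mp hn
  constructor
  · intro H l b hl hsum hb s t hst
    rw [levelSet_eq f' l b hl s, levelSet_eq f' l b hl t,
        levelSet_eq f'' l b hl s, levelSet_eq f'' l b hl t]
    exact H _ _ (fun j => by nlinarith [hl j])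
  · intro H u v huv
    set d : Fin n → ℝ := fun j => v j - u j with hd
    have hdpos : ∀ j, 0 < d j := fun j => sub_pos.mpr (huv j)
    set c : ℝ := Real.sqrt (∑ j, d j ^ 2) with hc
    have hsumpos : 0 < ∑ j, d j ^ 2 := by
      apply Finset.sum_pos (fun j _ => pow_pos (hdpos j) 2) Finset.univ_nonempty
    have hcpos : 0 < c := Real.sqrt_pos.mpr hsumpos
    set l : Fin n → ℝ := fun j => d j / c with hldef
    have hl : ∀ j, 0 < l j := fun j => div_pos (hdpos j) hcpos
    have hlsum : ∑ j, (l j) ^ 2 = 1 := by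
      simp only [hldef, div_pow]
      rw [← Finset.sum_div]
      rw [Real.sq_sqrt hsumpos.le]
      exact div_self hsumpos.ne'
    have hlpos : 0 < ∑ j, l j :=
      Finset.sum_pos (fun j _ => hl j) Finset.univ_nonempty
    set s : ℝ := (∑ j, u j) / (∑ j, l j) with hs
    set b : Fin n → ℝ := fun j => u j - s * l j with hbdef
    have hbsum : ∑ j, b j = 0 := by
      simp only [hbdef]
      rw [Finset.sum_sub_distrib, ← Finset.mul_sum, hs, div_mul_cancel₀ _ hlpos.ne']
      ring
    have hu : ∀ j, u j = s * l j + b j := fun j => by simp [hbdef]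
    have hv : ∀ j, v j = (s + c) * l j + b j := by
      intro j
      simp only [hbdef, hldef]
      field_simp
      ring
    have := H l b hl hlsum hbsum s (s + c) (by linarith)
    rw [levelSet_eq f' l b hl s, levelSet_eq f' l b hl (s + c),
        levelSet_eq f'' l b hl s, levelSet_eq f'' l b hl (s + c)] at this
    convert this using 5 <;> simp only [← hu, ← hv]
end

section
/- Define f : ℝ² → ℝ by f(u, v) = max(v − u²·sin(1/u), −v − u²·sin(1/u)) for u ≠ 0 and f(0, v) = max(v, −v) = |v|. Then the lower level set {(u, v) ∈ ℝ² : f(u, v) ≤ 0} has infinitely many connected components (its set of connected components is infinite). -/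
open Real

/-- the maximum of two tame functions need not be tame.
Define `f : ℝ² → ℝ` by `f(u, v) = max (v − u²·sin(1/u)) (−v − u²·sin(1/u))`
for `u ≠ 0` and `f(0, v) = max v (−v)`.  Then the lower level set
`{f ≤ 0}` has infinitely many connected components. -/
theorem stmt_6
    (f : ℝ × ℝ → ℝ)
    (hf : ∀ p : ℝ × ℝ, f p =
      if p.1 = 0 then max p.2 (-p.2)
      else max (p.2 - p.1 ^ 2 * Real.sin (1 / p.1))
               (-p.2 - p.1 ^ 2 * Real.sin (1 / p.1))) :
    Infinite (ConnectedComponents (↥{p : ℝ × ℝ | f p ≤ 0})) := by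
  set S : Set (ℝ × ℝ) := {p : ℝ × ℝ | f p ≤ 0} with hS
  have hpi : (0:ℝ) < π := Real.pi_pos
  -- base points
  have hposk : ∀ k : ℕ, (0:ℝ) < π/2 + k * (2*π) := by
    intro k
    positivity
  have hukpos : ∀ k : ℕ, (0:ℝ) < (π/2 + k * (2*π))⁻¹ := fun k => inv_pos.mpr (hposk k)
  have hmem : ∀ k : ℕ, ((π/2 + k * (2*π))⁻¹, (0:ℝ)) ∈ S := by
    intro k
    have hne : (π/2 + k * (2*π))⁻¹ ≠ 0 := ne_of_gt (hukpos k)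
    simp only [hS, Set.mem_setOf_eq, hf]
    rw [if_neg hne]
    have h1 : (1:ℝ) / (π/2 + k * (2*π))⁻¹ = π/2 + k * (2*π) := by
      rw [one_div, inv_inv]
    rw [h1, Real.sin_add_nat_mul_two_pi, Real.sin_pi_div_two]
    simp only [zero_sub, neg_zero, mul_one, max_self]
    nlinarith [sq_nonneg ((π/2 + (k:ℝ) * (2*π))⁻¹)]
  set g : ℕ → ↥S := fun k => ⟨((π/2 + k * (2*π))⁻¹, (0:ℝ)), hmem k⟩ with hg
  -- key: distinct components for k < j
  have key : ∀ k j : ℕ, k < j →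
      (ConnectedComponents.mk (g k)) ≠ (ConnectedComponents.mk (g j)) := by
    intro k j hkj h
    rw [ConnectedComponents.coe_eq_coe] at h
    have hk : g k ∈ connectedComponent (g j) := by
      rw [← h]; exact mem_connectedComponent
    have hj : g j ∈ connectedComponent (g j) := mem_connectedComponent
    have hconn : IsPreconnected (connectedComponent (g j)) :=
      isPreconnected_connectedComponent
    have hcont : ContinuousOn (fun z : ↥S => z.1.1) (connectedComponent (g j)) :=
      (continuous_fst.comp continuous_subtype_val).continuousOn
    -- the gap value
    set c : ℝ := 3*π/2 + k * (2*π) with hc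
    have hcpos : (0:ℝ) < c := by positivity
    have hlt1 : (π/2 + (k:ℝ) * (2*π)) < c := by simp only [hc]; linarith
    have hlt2 : c < π/2 + (j:ℝ) * (2*π) := by
      have : (k:ℝ) + 1 ≤ j := by exact_mod_cast hkj
      simp only [hc]; nlinarith
    have hmemIcc : c⁻¹ ∈ Set.Icc ((fun z : ↥S => z.1.1) (g j)) ((fun z : ↥S => z.1.1) (g k)) := by
      constructor
      · exact inv_anti₀ hcpos hlt2.le
      · exact inv_anti₀ (hposk k) hlt1.le
    obtain ⟨z, _, hz'⟩ := hconn.intermediate_value hj hk hcont hmemIcc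
    have hz : (z : ℝ × ℝ).1 = c⁻¹ := hz'
    -- z : ↥S with z.1.1 = c⁻¹, derive contradiction
    have hzS : f z.1 ≤ 0 := z.2
    have hcinv : (0:ℝ) < c⁻¹ := inv_pos.mpr hcpos
    have hne : z.1.1 ≠ 0 := by rw [hz]; exact ne_of_gt hcinv
    rw [hf, if_neg hne] at hzS
    have hsin : Real.sin (1 / z.1.1) = -1 := by
      rw [hz, one_div, inv_inv, hc]
      have : 3*π/2 + (k:ℝ) * (2*π) = π + π/2 + k * (2*π) := by ring
      rw [this, Real.sin_add_nat_mul_two_pi]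
      have h2 : π + π/2 = π/2 + π := by ring
      rw [h2, Real.sin_add_pi, Real.sin_pi_div_two]
    rw [hsin] at hzS
    have h1 : z.1.2 - z.1.1 ^ 2 * (-1) ≤ 0 := le_trans (le_max_left _ _) hzS
    have h2 : -z.1.2 - z.1.1 ^ 2 * (-1) ≤ 0 := le_trans (le_max_right _ _) hzS
    have : z.1.1 ^ 2 ≤ 0 := by nlinarith
    have : z.1.1 = 0 := by nlinarith [sq_nonneg z.1.1]
    exact hne this
  have hinj : Function.Injective (fun k => ConnectedComponents.mk (g k)) := by
    intro a b hab
    by_contra hne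
    rcases lt_or_gt_of_ne hne with h | h
    · exact key a b h hab
    · exact key b a h hab.symm
  exact Infinite.of_injective _ hinj
end

section
/- Let X = {(u, v, w) ∈ ℝ³ : u² + v² = 1 and v = w} be an ellipse embedded in ℝ³, with subspace topology. For every ū with 0 < ū < 1 and every w̄ with √(1 − ū²) ≤ w̄ < 1, the lower level set {(u, v, w) ∈ X : u ≤ ū and w ≤ w̄} has exactly two connected components. -/
open Real Set Topology

/-- Parametrization of the upper-right part of the circle. -/
noncomputable def stmt7Aux.f1 : ℝ → ℝ × ℝ × ℝ :=
  fun u => (u, Real.sqrt (1 - u ^ 2), Real.sqrt (1 - u ^ 2))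

/-- Angle parametrization of the circle (lifted to the ellipse). -/
noncomputable def stmt7Aux.g : ℝ → ℝ × ℝ × ℝ :=
  fun θ => (Real.cos θ, Real.sin θ, Real.sin θ)

lemma stmt7Aux.f1_cont : Continuous stmt7Aux.f1 := by
  have hsq : Continuous fun u : ℝ => Real.sqrt (1 - u ^ 2) :=
    Real.continuous_sqrt.comp (by continuity)
  exact continuous_id.prodMk (hsq.prodMk hsq)

lemma stmt7Aux.g_cont : Continuous stmt7Aux.g :=
  Real.continuous_cos.prodMk (Real.continuous_sin.prodMk Real.continuous_sin)

set_option maxHeartbeats 1000000 in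
/-- ellipse example, lower level sets of `φ = (u, w)`.
Let `X = {(u,v,w) ∈ ℝ³ : u² + v² = 1, v = w}` be an ellipse in `ℝ³`.
For every `ū` with `0 < ū < 1` and every `w̄` with `√(1 − ū²) ≤ w̄ < 1`,
the lower level set `{(u,v,w) ∈ X : u ≤ ū, w ≤ w̄}` has exactly two
connected components. -/
theorem stmt_7 (ub wb : ℝ) (h0 : 0 < ub) (h1 : ub < 1)
    (h2 : Real.sqrt (1 - ub ^ 2) ≤ wb) (h3 : wb < 1) :
    Nat.card (ConnectedComponents
      (↥{p : ℝ × ℝ × ℝ | (p.1 ^ 2 + p.2.1 ^ 2 = 1 ∧ p.2.1 = p.2.2) ∧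
          p.1 ≤ ub ∧ p.2.2 ≤ wb})) = 2 := by
  set S : Set (ℝ × ℝ × ℝ) :=
    {p : ℝ × ℝ × ℝ | (p.1 ^ 2 + p.2.1 ^ 2 = 1 ∧ p.2.1 = p.2.2) ∧
          p.1 ≤ ub ∧ p.2.2 ≤ wb} with hSdef
  have hpi : (0:ℝ) < π := Real.pi_pos
  have hub2 : (0:ℝ) ≤ 1 - ub ^ 2 := by nlinarith
  have hs0 : 0 ≤ Real.sqrt (1 - ub ^ 2) := Real.sqrt_nonneg _
  have hspos : 0 < Real.sqrt (1 - ub ^ 2) := Real.sqrt_pos.mpr (by nlinarith)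
  have hwb0 : 0 < wb := lt_of_lt_of_le hspos h2
  have hssq : Real.sqrt (1 - ub ^ 2) ^ 2 = 1 - ub ^ 2 := Real.sq_sqrt hub2
  have hwbsq : 1 - ub ^ 2 ≤ wb ^ 2 := by nlinarith
  have hc2 : (0:ℝ) ≤ 1 - wb ^ 2 := by nlinarith
  set c : ℝ := Real.sqrt (1 - wb ^ 2) with hcdef
  have hc0 : 0 < c := Real.sqrt_pos.mpr (by nlinarith)
  have hcsq : c ^ 2 = 1 - wb ^ 2 := Real.sq_sqrt hc2
  have hcub : c ≤ ub := by nlinarith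
  -- the key strictness fact
  have key : ∀ p : ℝ × ℝ × ℝ, p ∈ S → 0 ≤ p.1 → 0 ≤ p.2.1 → 0 < p.1 ∧ 0 < p.2.1 := by
    intro p hp hu0 hv0
    obtain ⟨⟨hcirc, hvw⟩, hu, hw⟩ := hp
    constructor
    · rcases hu0.lt_or_eq with h | h
      · exact h
      · exfalso; rw [← h] at hcirc; rw [hvw] at hv0; nlinarith
    · rcases hv0.lt_or_eq with h | h
      · exact h
      · exfalso; rw [← h] at hcirc; nlinarith
  set A : Set ↥S := {x : ↥S | 0 < (x : ℝ × ℝ × ℝ).1 ∧ 0 < (x : ℝ × ℝ × ℝ).2.1} with hAdef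
  have hAopen : IsOpen A := by
    have h : A = Subtype.val ⁻¹' ({p : ℝ × ℝ × ℝ | 0 < p.1} ∩ {p : ℝ × ℝ × ℝ | 0 < p.2.1}) := rfl
    rw [h]
    exact ((isOpen_lt continuous_const continuous_fst).inter
      (isOpen_lt continuous_const (continuous_fst.comp continuous_snd))).preimage
      continuous_subtype_val
  have hAclosed : IsClosed A := by
    have heq : A = Subtype.val ⁻¹'
        ({p : ℝ × ℝ × ℝ | 0 ≤ p.1} ∩ {p : ℝ × ℝ × ℝ | 0 ≤ p.2.1}) := by
      ext x
      constructor
      · rintro ⟨ha, hb⟩; exact ⟨ha.le, hb.le⟩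
      · rintro ⟨ha, hb⟩; exact key x x.2 ha hb
    rw [heq]
    exact ((isClosed_le continuous_const continuous_fst).inter
      (isClosed_le continuous_const (continuous_fst.comp continuous_snd))).preimage
      continuous_subtype_val
  have hAclopen : IsClopen A := ⟨hAclosed, hAopen⟩
  have hAimg : Subtype.val '' A = stmt7Aux.f1 '' Icc c ub := by
    ext p
    constructor
    · rintro ⟨⟨⟨u, v, w⟩, hxS⟩, hx, rfl⟩
      have hcirc : u ^ 2 + v ^ 2 = 1 := hxS.1.1
      have hvw : v = w := hxS.1.2
      have hu : u ≤ ub := hxS.2.1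
      have hw : w ≤ wb := hxS.2.2
      have hu0 : 0 < u := hx.1
      have hv0 : 0 < v := hx.2
      subst hvw
      have hveq : Real.sqrt (1 - u ^ 2) = v := by
        rw [show 1 - u ^ 2 = v ^ 2 by linarith]
        exact Real.sqrt_sq hv0.le
      have hcu : c ≤ u := by
        have h1u : 1 - wb ^ 2 ≤ u ^ 2 := by nlinarith
        calc c ≤ Real.sqrt (u ^ 2) := Real.sqrt_le_sqrt h1u
          _ = u := Real.sqrt_sq hu0.le
      refine ⟨u, ⟨hcu, hu⟩, ?_⟩
      show (u, Real.sqrt (1 - u ^ 2), Real.sqrt (1 - u ^ 2)) = (u, v, v)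
      rw [hveq]
    · rintro ⟨u, ⟨h1u, h2u⟩, rfl⟩
      have hu0 : 0 < u := lt_of_lt_of_le hc0 h1u
      have hu1 : u < 1 := lt_of_le_of_lt h2u h1
      have h1u2 : (0:ℝ) ≤ 1 - u ^ 2 := by nlinarith
      have hvpos : 0 < Real.sqrt (1 - u ^ 2) := Real.sqrt_pos.mpr (by nlinarith)
      have hvsq : Real.sqrt (1 - u ^ 2) ^ 2 = 1 - u ^ 2 := Real.sq_sqrt h1u2
      have hvwb : Real.sqrt (1 - u ^ 2) ≤ wb := by
        calc Real.sqrt (1 - u ^ 2) ≤ Real.sqrt (wb ^ 2) := Real.sqrt_le_sqrt (by nlinarith)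
          _ = wb := Real.sqrt_sq hwb0.le
      have hmem : stmt7Aux.f1 u ∈ S := by
        refine ⟨⟨?_, rfl⟩, h2u, hvwb⟩
        show u ^ 2 + Real.sqrt (1 - u ^ 2) ^ 2 = 1
        rw [hvsq]; ring
      exact ⟨⟨stmt7Aux.f1 u, hmem⟩, ⟨hu0, hvpos⟩, rfl⟩
  have hApre : IsPreconnected A := by
    apply IsInducing.subtypeVal.isPreconnected_image.mp
    rw [hAimg]
    exact isPreconnected_Icc.image stmt7Aux.f1 stmt7Aux.f1_cont.continuousOn
  set aa : ℝ := Real.arccos ub with haadef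
  set bb : ℝ := Real.arccos wb with hbbdef
  have haa0 : 0 < aa := Real.arccos_pos.mpr h1
  have haa2 : aa < π / 2 := Real.arccos_lt_pi_div_two.mpr h0
  have haapi : aa ≤ π := Real.arccos_le_pi ub
  have hbb0 : 0 < bb := Real.arccos_pos.mpr h3
  have hbb2 : bb < π / 2 := Real.arccos_lt_pi_div_two.mpr hwb0
  have hcosaa : Real.cos aa = ub := Real.cos_arccos (by linarith) h1.le
  have hcosbb : Real.cos bb = wb := Real.cos_arccos (by linarith) h3.le
  have hid : bb + Real.arccos c = π / 2 := by
    have h1' := Real.arcsin_eq_arccos hwb0.le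
    have h2' := Real.arccos_eq_pi_div_two_sub_arcsin wb
    rw [← hcdef] at h1'
    rw [hbbdef, h2', h1']
    ring
  have hmono : ∀ x y : ℝ, x ≤ y → Real.arccos y ≤ Real.arccos x := by
    intro x y h
    simp only [Real.arccos_eq_pi_div_two_sub_arcsin]
    linarith [Real.monotone_arcsin h]
  have hBimg : Subtype.val '' Aᶜ = stmt7Aux.g '' Icc (π / 2 + bb) (2 * π - aa) := by
    ext p
    constructor
    · rintro ⟨⟨⟨u, v, w⟩, hxS⟩, hx, rfl⟩
      have hcirc : u ^ 2 + v ^ 2 = 1 := hxS.1.1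
      have hvw : v = w := hxS.1.2
      have hu : u ≤ ub := hxS.2.1
      have hw : w ≤ wb := hxS.2.2
      subst hvw
      have hxA : ¬(0 < u ∧ 0 < v) := hx
      have hum : -1 ≤ u := by nlinarith
      have huM : u ≤ 1 := by nlinarith
      by_cases hv0 : 0 ≤ v
      · have hu0 : u ≤ 0 := by
          by_contra hcon
          push_neg at hcon
          have hv' : ¬ 0 < v := fun hv => hxA ⟨hcon, hv⟩
          have hveq : v = 0 := le_antisymm (not_lt.mp hv') hv0
          nlinarith
        have hsin : Real.sin (Real.arccos u) = v := by
          rw [Real.sin_arccos, show 1 - u ^ 2 = v ^ 2 by linarith]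
          exact Real.sqrt_sq hv0
        have hcos : Real.cos (Real.arccos u) = u := Real.cos_arccos hum huM
        have huc : u ≤ -c := by
          have h1u : 1 - wb ^ 2 ≤ u ^ 2 := by nlinarith
          have hcu : c ≤ -u := by
            calc c ≤ Real.sqrt (u ^ 2) := Real.sqrt_le_sqrt h1u
              _ = |u| := Real.sqrt_sq_eq_abs u
              _ = -u := abs_of_nonpos hu0
          linarith
        have hlo : π / 2 + bb ≤ Real.arccos u := by
          have ha' : Real.arccos (-c) ≤ Real.arccos u := hmono _ _ huc
          have hb' : Real.arccos (-c) = π - Real.arccos c := Real.arccos_neg c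
          linarith
        have hhi : Real.arccos u ≤ 2 * π - aa := by
          have := Real.arccos_le_pi u
          linarith
        refine ⟨Real.arccos u, ⟨hlo, hhi⟩, ?_⟩
        show (Real.cos (Real.arccos u), Real.sin (Real.arccos u),
          Real.sin (Real.arccos u)) = (u, v, v)
        rw [hsin, hcos]
      · push_neg at hv0
        have hsin : Real.sin (2 * π - Real.arccos u) = v := by
          rw [Real.sin_two_pi_sub, Real.sin_arccos,
            show 1 - u ^ 2 = v ^ 2 by linarith]
          rw [Real.sqrt_sq_eq_abs, abs_of_nonpos hv0.le]
          ring
        have hcos : Real.cos (2 * π - Real.arccos u) = u := by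
          rw [Real.cos_two_pi_sub]
          exact Real.cos_arccos hum huM
        have hlo : π / 2 + bb ≤ 2 * π - Real.arccos u := by
          have := Real.arccos_le_pi u
          linarith
        have hhi : 2 * π - Real.arccos u ≤ 2 * π - aa := by
          have := hmono u ub hu
          linarith
        refine ⟨2 * π - Real.arccos u, ⟨hlo, hhi⟩, ?_⟩
        show (Real.cos (2 * π - Real.arccos u), Real.sin (2 * π - Real.arccos u),
          Real.sin (2 * π - Real.arccos u)) = (u, v, v)
        rw [hsin, hcos]
    · rintro ⟨θ, ⟨hlo, hhi⟩, rfl⟩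
      have hθ1 : π / 2 < θ := by linarith
      have hθ2 : θ < 2 * π := by linarith
      have hcosle : Real.cos θ ≤ ub := by
        by_cases hθπ : θ ≤ π
        · have : Real.cos θ ≤ 0 :=
            Real.cos_nonpos_of_pi_div_two_le_of_le hθ1.le (by linarith)
          linarith
        · push_neg at hθπ
          have ha' : Real.cos (2 * π - θ) ≤ Real.cos aa :=
            Real.cos_le_cos_of_nonneg_of_le_pi (Real.arccos_nonneg ub)
              (by linarith) (by linarith)
          rw [Real.cos_two_pi_sub, hcosaa] at ha'
          exact ha'
      have hsinle : Real.sin θ ≤ wb := by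
        by_cases hθ3 : θ ≤ 3 * π / 2
        · have ha' : Real.cos (θ - π / 2) ≤ Real.cos bb :=
            Real.cos_le_cos_of_nonneg_of_le_pi hbb0.le (by linarith) (by linarith)
          rw [Real.cos_sub_pi_div_two, hcosbb] at ha'
          exact ha'
        · push_neg at hθ3
          have ha' : 0 ≤ Real.sin (2 * π - θ) :=
            Real.sin_nonneg_of_nonneg_of_le_pi (by linarith) (by linarith)
          rw [Real.sin_two_pi_sub] at ha'
          linarith
      have hnot : ¬(0 < Real.cos θ ∧ 0 < Real.sin θ) := by
        rintro ⟨hc', hs'⟩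
        by_cases hθ3 : θ ≤ 3 * π / 2
        · have : Real.cos θ ≤ 0 :=
            Real.cos_nonpos_of_pi_div_two_le_of_le hθ1.le (by linarith)
          linarith
        · push_neg at hθ3
          have ha' : 0 ≤ Real.sin (2 * π - θ) :=
            Real.sin_nonneg_of_nonneg_of_le_pi (by linarith) (by linarith)
          rw [Real.sin_two_pi_sub] at ha'
          linarith
      have hmem : stmt7Aux.g θ ∈ S := by
        refine ⟨⟨?_, rfl⟩, hcosle, hsinle⟩
        show Real.cos θ ^ 2 + Real.sin θ ^ 2 = 1
        have := Real.sin_sq_add_cos_sq θ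
        linarith
      exact ⟨⟨stmt7Aux.g θ, hmem⟩, hnot, rfl⟩
  have hBpre : IsPreconnected (Aᶜ : Set ↥S) := by
    apply IsInducing.subtypeVal.isPreconnected_image.mp
    rw [hBimg]
    exact isPreconnected_Icc.image stmt7Aux.g stmt7Aux.g_cont.continuousOn
  -- the two base points
  have hxAmem : stmt7Aux.f1 ub ∈ Subtype.val '' A := by
    rw [hAimg]; exact ⟨ub, ⟨hcub, le_refl ub⟩, rfl⟩
  obtain ⟨xA, hxA, hxAeq⟩ := hxAmem
  have hpBmem : ((-1 : ℝ), (0 : ℝ), (0 : ℝ)) ∈ S := by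
    refine ⟨⟨by norm_num, rfl⟩, show (-1:ℝ) ≤ ub by linarith, hwb0.le⟩
  set xB : ↥S := ⟨((-1 : ℝ), (0 : ℝ), (0 : ℝ)), hpBmem⟩ with hxBdef
  have hxB : xB ∈ (Aᶜ : Set ↥S) := by
    intro hmem
    have h1' : (0:ℝ) < -1 := hmem.1
    linarith
  -- conclusion
  rw [Nat.card_eq_two_iff]
  refine ⟨ConnectedComponents.mk xA, ConnectedComponents.mk xB, ?_, ?_⟩
  · intro h
    have heq : connectedComponent xA = connectedComponent xB :=
      ConnectedComponents.coe_eq_coe.mp h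
    have hxBin : xB ∈ connectedComponent xA := heq ▸ mem_connectedComponent
    exact hxB (hAclopen.connectedComponent_subset hxA hxBin)
  · apply Set.eq_univ_of_forall
    intro z
    obtain ⟨x, rfl⟩ := ConnectedComponents.surjective_coe z
    simp only [Set.mem_insert_iff, Set.mem_singleton_iff]
    by_cases hx : x ∈ A
    · left
      exact ConnectedComponents.coe_eq_coe'.mpr (hApre.subset_connectedComponent hxA hx)
    · right
      exact ConnectedComponents.coe_eq_coe'.mpr (hBpre.subset_connectedComponent hxB hx)
end

section
/- Let S = {(u, v, w) ∈ ℝ³ : u² + v² + w² = 1} be the unit sphere with subspace topology. For every c with 0 ≤ c < 1/√2, the set {(u, v, w) ∈ S : max(|u|, |v|) ≤ c} has exactly two connected components. -/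
private lemma stmt10_pole_mem (c : ℝ) (h0 : 0 ≤ c) (ε : ℝ) (hε : ε = 1 ∨ ε = -1) :
    ((0 : ℝ), (0 : ℝ), ε) ∈ {p : ℝ × ℝ × ℝ | p.1 ^ 2 + p.2.1 ^ 2 + p.2.2 ^ 2 = 1 ∧
      max |p.1| |p.2.1| ≤ c} := by
  rcases hε with rfl | rfl <;> constructor <;> norm_num [h0]

private lemma stmt10_joined (c : ℝ) (h0 : 0 ≤ c) (hc2 : 2 * c ^ 2 < 1)
    (ε : ℝ) (hε : ε = 1 ∨ ε = -1)
    (p : {p : ℝ × ℝ × ℝ | p.1 ^ 2 + p.2.1 ^ 2 + p.2.2 ^ 2 = 1 ∧ max |p.1| |p.2.1| ≤ c})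
    (hw : 0 < ε * (p : ℝ × ℝ × ℝ).2.2) :
    Joined p ⟨((0 : ℝ), (0 : ℝ), ε), stmt10_pole_mem c h0 ε hε⟩ := by
  obtain ⟨⟨u, v, w⟩, hsum, hmax⟩ := p
  simp only at hsum hmax hw ⊢
  have hu : |u| ≤ c := le_trans (le_max_left _ _) hmax
  have hv : |v| ≤ c := le_trans (le_max_right _ _) hmax
  have hu2 : u ^ 2 ≤ c ^ 2 := by nlinarith [sq_abs u, abs_nonneg u]
  have hv2 : v ^ 2 ≤ c ^ 2 := by nlinarith [sq_abs v, abs_nonneg v]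
  have hε2 : ε ^ 2 = 1 := by rcases hε with rfl | rfl <;> norm_num
  have hX : ∀ t : unitInterval, 0 ≤ 1 - (1 - (t : ℝ)) ^ 2 * (u ^ 2 + v ^ 2) := by
    intro t
    have h1t : 0 ≤ 1 - (t : ℝ) := by have := t.2.2; linarith
    have h1t' : 1 - (t : ℝ) ≤ 1 := by have := t.2.1; linarith
    nlinarith
  have hmemt : ∀ t : unitInterval,
      ((1 - (t : ℝ)) * u, (1 - (t : ℝ)) * v,
        ε * Real.sqrt (1 - (1 - (t : ℝ)) ^ 2 * (u ^ 2 + v ^ 2))) ∈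
      {p : ℝ × ℝ × ℝ | p.1 ^ 2 + p.2.1 ^ 2 + p.2.2 ^ 2 = 1 ∧ max |p.1| |p.2.1| ≤ c} := by
    intro t
    have h1t : 0 ≤ 1 - (t : ℝ) := by have := t.2.2; linarith
    have h1t' : 1 - (t : ℝ) ≤ 1 := by have := t.2.1; linarith
    have hs := Real.sq_sqrt (hX t)
    constructor
    · simp only
      nlinarith [hs, hε2]
    · simp only
      rw [abs_mul, abs_mul, abs_of_nonneg h1t]
      refine max_le ?_ ?_
      · calc (1 - (t : ℝ)) * |u| ≤ 1 * |u| := by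
              apply mul_le_mul_of_nonneg_right h1t' (abs_nonneg u)
          _ = |u| := one_mul _
          _ ≤ c := hu
      · calc (1 - (t : ℝ)) * |v| ≤ 1 * |v| := by
              apply mul_le_mul_of_nonneg_right h1t' (abs_nonneg v)
          _ = |v| := one_mul _
          _ ≤ c := hv
  refine ⟨⟨⟨fun t => ⟨((1 - (t : ℝ)) * u, (1 - (t : ℝ)) * v,
      ε * Real.sqrt (1 - (1 - (t : ℝ)) ^ 2 * (u ^ 2 + v ^ 2))), hmemt t⟩, ?_⟩, ?_, ?_⟩⟩
  · apply Continuous.subtype_mk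
    fun_prop
  · ext : 1
    simp only [Path.coe_mk_mk, Set.Icc.coe_zero]
    have hw2 : 1 - (1 - (0 : ℝ)) ^ 2 * (u ^ 2 + v ^ 2) = w ^ 2 := by ring_nf; linarith
    rw [hw2, Real.sqrt_sq_eq_abs]
    have : ε * |w| = w := by
      rcases hε with rfl | rfl
      · rw [abs_of_pos (by linarith)]; ring
      · rw [abs_of_neg (by linarith)]; ring
    simp [this]
  · ext : 1
    simp only [Path.coe_mk_mk, Set.Icc.coe_one]
    norm_num

/-- sphere example: lower level sets of `max(|u|,|v|)` below
the critical value.  Let `S` be the unit sphere in `ℝ³`.  For every `c` with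
`0 ≤ c < 1/√2`, the set `{(u,v,w) ∈ S : max(|u|,|v|) ≤ c}` has exactly two
connected components. -/
theorem stmt_10 (c : ℝ) (h0 : 0 ≤ c) (h1 : c < 1 / Real.sqrt 2) :
    Nat.card (ConnectedComponents
      (↥{p : ℝ × ℝ × ℝ | p.1 ^ 2 + p.2.1 ^ 2 + p.2.2 ^ 2 = 1 ∧
          max |p.1| |p.2.1| ≤ c})) = 2 := by
  have hs2 : (0:ℝ) < Real.sqrt 2 := Real.sqrt_pos.mpr (by norm_num)
  have hcs : c * Real.sqrt 2 < 1 := (lt_div_iff₀ hs2).mp h1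
  have hc2 : 2 * c ^ 2 < 1 := by
    nlinarith [Real.sq_sqrt (by norm_num : (0:ℝ) ≤ 2), Real.sqrt_nonneg 2]
  set K : Set (ℝ × ℝ × ℝ) := {p : ℝ × ℝ × ℝ | p.1 ^ 2 + p.2.1 ^ 2 + p.2.2 ^ 2 = 1 ∧
      max |p.1| |p.2.1| ≤ c} with hK
  set n : K := ⟨((0:ℝ), (0:ℝ), (1:ℝ)), stmt10_pole_mem c h0 1 (Or.inl rfl)⟩ with hn
  set s : K := ⟨((0:ℝ), (0:ℝ), (-1:ℝ)), stmt10_pole_mem c h0 (-1) (Or.inr rfl)⟩ with hs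
  have hwne : ∀ q : K, (q : ℝ × ℝ × ℝ).2.2 ≠ 0 := by
    rintro ⟨⟨u, v, w⟩, hsum, hmax⟩ hw0
    simp only at hsum hw0
    have hu : |u| ≤ c := le_trans (le_max_left _ _) hmax
    have hv : |v| ≤ c := le_trans (le_max_right _ _) hmax
    have hu2 : u ^ 2 ≤ c ^ 2 := by nlinarith [sq_abs u, abs_nonneg u]
    have hv2 : v ^ 2 ≤ c ^ 2 := by nlinarith [sq_abs v, abs_nonneg v]
    rw [hw0] at hsum
    nlinarith
  have hcontw : Continuous fun q : K => (q : ℝ × ℝ × ℝ).2.2 :=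
    (continuous_subtype_val.snd).snd
  set U : Set K := {q : K | 0 < (q : ℝ × ℝ × ℝ).2.2} with hU
  have hUopen : IsOpen U := isOpen_lt continuous_const hcontw
  have hUeq : U = {q : K | 0 ≤ (q : ℝ × ℝ × ℝ).2.2} := by
    ext q
    simp only [hU, Set.mem_setOf_eq]
    exact ⟨le_of_lt, fun h => lt_of_le_of_ne h (Ne.symm (hwne q))⟩
  have hUclosed : IsClosed U := hUeq ▸ isClosed_le continuous_const hcontw
  have hclopen : IsClopen U := ⟨hUclosed, hUopen⟩
  have hjoin : ∀ q : K, ((q : ConnectedComponents K) = (n : ConnectedComponents K)) ∨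
      ((q : ConnectedComponents K) = (s : ConnectedComponents K)) := by
    intro q
    rcases (hwne q).lt_or_gt with h | h
    · right
      have hj := stmt10_joined c h0 hc2 (-1) (Or.inr rfl) q (by nlinarith)
      exact ConnectedComponents.coe_eq_coe.mpr
        (connectedComponent_eq (pathComponent_subset_component _ hj))
    · left
      have hj := stmt10_joined c h0 hc2 1 (Or.inl rfl) q (by nlinarith)
      exact ConnectedComponents.coe_eq_coe.mpr
        (connectedComponent_eq (pathComponent_subset_component _ hj))
  have hne : (n : ConnectedComponents K) ≠ (s : ConnectedComponents K) := by
    intro h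
    have hcc := ConnectedComponents.coe_eq_coe.mp h
    have hsub : connectedComponent n ⊆ U :=
      hclopen.connectedComponent_subset (by norm_num [hU, hn])
    have : s ∈ connectedComponent n := hcc ▸ mem_connectedComponent
    have := hsub this
    simp only [hU, hs, Set.mem_setOf_eq] at this
    linarith
  rw [Nat.card_eq_two_iff]
  refine ⟨(n : ConnectedComponents K), (s : ConnectedComponents K), hne, ?_⟩
  ext x
  simp only [Set.mem_insert_iff, Set.mem_singleton_iff, Set.mem_univ, iff_true]
  obtain ⟨q, rfl⟩ := ConnectedComponents.surjective_coe x
  exact hjoin q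
end

section
/- Let S = {(u, v, w) ∈ ℝ³ : u² + v² + w² = 1} be the unit sphere with subspace topology. For every c with c ≥ 1/√2, the set {(u, v, w) ∈ S : max(|u|, |v|) ≤ c} is connected (and nonempty). -/
open Real

private lemma stmt11_join_pole (c : ℝ) (e : ℝ) (he : e ^ 2 = 1)
    (p : ℝ × ℝ × ℝ)
    (hp : p.1 ^ 2 + p.2.1 ^ 2 + p.2.2 ^ 2 = 1 ∧ max |p.1| |p.2.1| ≤ c)
    (hw : 0 ≤ e * p.2.2) :
    JoinedIn {q : ℝ × ℝ × ℝ | q.1 ^ 2 + q.2.1 ^ 2 + q.2.2 ^ 2 = 1 ∧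
      max |q.1| |q.2.1| ≤ c} p (0, 0, e) := by
  obtain ⟨u, v, w⟩ := p
  obtain ⟨hs, hm⟩ := hp
  simp only at hs hm hw ⊢
  set n : ℝ → ℝ := fun t =>
    Real.sqrt (((1-t)*u)^2 + ((1-t)*v)^2 + ((1-t)*w + t*e)^2) with hn
  have hrad : ∀ t : ℝ, 0 ≤ t → t ≤ 1 →
      ((1-t)*u)^2 + ((1-t)*v)^2 + ((1-t)*w + t*e)^2
        = (1-t)^2 + t^2 + 2*t*(1-t)*(e*w) := by
    intro t _ _; nlinarith [sq_nonneg (1-t), sq_nonneg t]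
  have hbig : ∀ t : ℝ, 0 ≤ t → t ≤ 1 →
      (1-t)^2 ≤ ((1-t)*u)^2 + ((1-t)*v)^2 + ((1-t)*w + t*e)^2 ∧
      (1/2 : ℝ) ≤ ((1-t)*u)^2 + ((1-t)*v)^2 + ((1-t)*w + t*e)^2 := by
    intro t ht0 ht1
    rw [hrad t ht0 ht1]
    constructor
    · nlinarith [mul_nonneg (mul_nonneg (mul_nonneg (by norm_num : (0:ℝ) ≤ 2) ht0) (by linarith : (0:ℝ) ≤ 1-t)) hw]
    · nlinarith [sq_nonneg (1 - 2*t), mul_nonneg (mul_nonneg (mul_nonneg (by norm_num : (0:ℝ) ≤ 2) ht0) (by linarith : (0:ℝ) ≤ 1-t)) hw]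
  have hnpos : ∀ t : ℝ, 0 ≤ t → t ≤ 1 → 0 < n t := by
    intro t ht0 ht1
    have := (hbig t ht0 ht1).2
    exact Real.sqrt_pos.mpr (by linarith)
  have hnge : ∀ t : ℝ, 0 ≤ t → t ≤ 1 → 1 - t ≤ n t := by
    intro t ht0 ht1
    have h1 := (hbig t ht0 ht1).1
    calc 1 - t = Real.sqrt ((1-t)^2) := by
          rw [Real.sqrt_sq (by linarith)]
      _ ≤ n t := Real.sqrt_le_sqrt h1
  have hcont : Continuous fun t : unitInterval =>
      ((((1:ℝ)-t.1)*u)/n t.1, (((1:ℝ)-t.1)*v)/n t.1, (((1:ℝ)-t.1)*w + t.1*e)/n t.1) := by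
    have hnc : Continuous fun t : unitInterval => n t.1 := by
      apply Real.continuous_sqrt.comp; fun_prop
    have hne : ∀ t : unitInterval, n t.1 ≠ 0 :=
      fun t => (hnpos t.1 t.2.1 t.2.2).ne'
    refine Continuous.prodMk ?_ (Continuous.prodMk ?_ ?_) <;>
      exact Continuous.div (by fun_prop) hnc hne
  have hn0 : n 0 = 1 := by
    simp only [hn]
    rw [show ((1-(0:ℝ))*u)^2 + ((1-(0:ℝ))*v)^2 + ((1-(0:ℝ))*w + 0*e)^2 = 1 by
      nlinarith]
    exact Real.sqrt_one
  have hn1 : n 1 = 1 := by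
    simp only [hn]
    rw [show ((1-(1:ℝ))*u)^2 + ((1-(1:ℝ))*v)^2 + ((1-(1:ℝ))*w + 1*e)^2 = 1 by
      nlinarith]
    exact Real.sqrt_one
  refine ⟨⟨⟨fun t =>
      ((((1:ℝ)-t.1)*u)/n t.1, (((1:ℝ)-t.1)*v)/n t.1, (((1:ℝ)-t.1)*w + t.1*e)/n t.1),
      hcont⟩, ?_, ?_⟩, ?_⟩
  · simp [hn0]
  · simp [hn1]
  · intro t
    have ht0 := t.2.1; have ht1 := t.2.2
    have hnp := hnpos t.1 ht0 ht1
    have hsq : (n t.1)^2 = ((1-t.1)*u)^2 + ((1-t.1)*v)^2 + ((1-t.1)*w + t.1*e)^2 :=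
      Real.sq_sqrt (by nlinarith [(hbig t.1 ht0 ht1).2])
    constructor
    · simp only [Path.coe_mk_mk]
      field_simp
      linarith [hsq]
    · have key : ∀ x : ℝ, |x| ≤ c → |((1-t.1)*x)/n t.1| ≤ c := by
        intro x hx
        rw [abs_div, abs_of_pos hnp, div_le_iff₀ hnp]
        have h1 : |(1-t.1)*x| = (1-t.1)*|x| := by
          rw [abs_mul, abs_of_nonneg (by linarith : (0:ℝ) ≤ 1-t.1)]
        rw [h1]
        have hc0 : 0 ≤ c := le_trans (abs_nonneg x) hx
        calc (1-t.1)*|x| ≤ (1-t.1)*c := by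
              exact mul_le_mul_of_nonneg_left hx (by linarith)
          _ ≤ n t.1 * c := mul_le_mul_of_nonneg_right (hnge t.1 ht0 ht1) hc0
          _ = c * n t.1 := mul_comm _ _
        
      exact max_le (key u (le_trans (le_max_left _ _) hm))
        (key v (le_trans (le_max_right _ _) hm))

private lemma stmt11_poles (c : ℝ) (hc : 1 / Real.sqrt 2 ≤ c) :
    JoinedIn {q : ℝ × ℝ × ℝ | q.1 ^ 2 + q.2.1 ^ 2 + q.2.2 ^ 2 = 1 ∧
      max |q.1| |q.2.1| ≤ c} ((0:ℝ), (0:ℝ), (1:ℝ)) (0, 0, -1) := by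
  have h2 : (0:ℝ) < Real.sqrt 2 := Real.sqrt_pos.mpr (by norm_num)
  refine ⟨⟨⟨fun t =>
      (Real.sin (π * t.1) / Real.sqrt 2, Real.sin (π * t.1) / Real.sqrt 2,
        Real.cos (π * t.1)), by fun_prop⟩, ?_, ?_⟩, ?_⟩
  · simp
  · simp
  · intro t
    simp only [Path.coe_mk_mk, Set.mem_setOf_eq]
    constructor
    · have hs2 : (Real.sqrt 2)^2 = 2 := Real.sq_sqrt (by norm_num)
      have hd : (Real.sin (π * t.1) / Real.sqrt 2)^2 = Real.sin (π * t.1)^2 / 2 := by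
        rw [div_pow, hs2]
      have := Real.sin_sq_add_cos_sq (π * t.1)
      rw [hd]; linarith
    · have hb : |Real.sin (π * t.1) / Real.sqrt 2| ≤ 1 / Real.sqrt 2 := by
        rw [abs_div, abs_of_pos h2, div_le_div_iff₀ h2 h2]
        exact mul_le_mul_of_nonneg_right (Real.abs_sin_le_one _) (le_of_lt h2)
      rw [max_self]
      exact le_trans hb hc

/-- sphere example: lower level sets of `max(|u|,|v|)` at or
above the critical value `1/√2`.  Let `S` be the unit sphere in `ℝ³`.  For
every `c ≥ 1/√2`, the set `{(u,v,w) ∈ S : max(|u|,|v|) ≤ c}` is connected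
(and nonempty). -/
theorem stmt_11 (c : ℝ) (hc : 1 / Real.sqrt 2 ≤ c) :
    IsConnected {p : ℝ × ℝ × ℝ | p.1 ^ 2 + p.2.1 ^ 2 + p.2.2 ^ 2 = 1 ∧
      max |p.1| |p.2.1| ≤ c} := by
  have hc0 : 0 ≤ c := le_trans (by positivity) hc
  apply IsPathConnected.isConnected
  refine ⟨((0:ℝ), (0:ℝ), (1:ℝ)), ⟨by norm_num, by simpa using hc0⟩, ?_⟩
  intro y hy
  rcases le_or_gt 0 y.2.2 with h | h
  · exact (stmt11_join_pole c 1 (by norm_num) y hy (by simpa using h)).symm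
  · have h1 := stmt11_join_pole c (-1) (by norm_num) y hy
      (by simp; linarith)
    have h2 := stmt11_poles c hc
    exact h2.trans h1.symm
end

section
/- Let S = {(u, v, w) ∈ ℝ³ : u² + v² + w² = 1} be the unit sphere with subspace topology. For every c with 1/√2 ≤ c < 1, the set {(u, v, w) ∈ S : max(|u|, |v|) > c} has exactly four connected components. -/
open Set

private lemma cap_conn (c : ℝ) (hc0 : 0 < c) (hc1 : c < 1) :
    IsConnected {p : ℝ × ℝ × ℝ | p.1 ^ 2 + p.2.1 ^ 2 + p.2.2 ^ 2 = 1 ∧ c < p.1} := by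
  set f : ℝ × ℝ → ℝ × ℝ × ℝ := fun q =>
    (q.1, Real.sqrt (1 - q.1 ^ 2) * Real.cos q.2, Real.sqrt (1 - q.1 ^ 2) * Real.sin q.2) with hf
  have hcont : Continuous f := by
    apply Continuous.prodMk continuous_fst
    apply Continuous.prodMk
    · exact ((continuous_const.sub (continuous_fst.pow 2)).sqrt.mul
        (Real.continuous_cos.comp continuous_snd))
    · exact ((continuous_const.sub (continuous_fst.pow 2)).sqrt.mul
        (Real.continuous_sin.comp continuous_snd))
  have hD : IsConnected ((Ioc c 1) ×ˢ (univ : Set ℝ)) :=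
    (isConnected_Ioc hc1).prod isConnected_univ
  have himg : f '' ((Ioc c 1) ×ˢ (univ : Set ℝ)) =
      {p : ℝ × ℝ × ℝ | p.1 ^ 2 + p.2.1 ^ 2 + p.2.2 ^ 2 = 1 ∧ c < p.1} := by
    ext p
    constructor
    · rintro ⟨⟨t, θ⟩, ⟨⟨htc, ht1⟩, -⟩, rfl⟩
      have h1 : (0:ℝ) ≤ 1 - t ^ 2 := by
        simp only [Set.mem_Ioc] at htc ht1
        nlinarith
      refine ⟨?_, htc⟩
      have hsq : Real.sqrt (1 - t ^ 2) ^ 2 = 1 - t ^ 2 := Real.sq_sqrt h1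
      simp only [hf]
      nlinarith [Real.sin_sq_add_cos_sq θ, hsq]
    · rintro ⟨hs, hcu⟩
      obtain ⟨u, v, w⟩ := p
      simp only [Set.mem_setOf_eq] at hs hcu
      have hu1 : u ≤ 1 := by nlinarith
      have h10 : (0:ℝ) ≤ 1 - u ^ 2 := by nlinarith
      have hsq : Real.sqrt (1 - u ^ 2) ^ 2 = 1 - u ^ 2 := Real.sq_sqrt h10
      by_cases hz : v = 0 ∧ w = 0
      · obtain ⟨rfl, rfl⟩ := hz
        refine ⟨(u, 0), ⟨⟨hcu, hu1⟩, trivial⟩, ?_⟩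
        have h0 : 1 - u ^ 2 = 0 := by nlinarith
        simp [hf, h0]
      · set z : ℂ := ⟨v, w⟩ with hzdef
        have hz0 : z ≠ 0 := by
          intro h
          apply hz
          constructor
          · have := congrArg Complex.re h; simpa [hzdef] using this
          · have := congrArg Complex.im h; simpa [hzdef] using this
        have habsne : ‖z‖ ≠ 0 := norm_ne_zero_iff.mpr hz0
        have habs : ‖z‖ = Real.sqrt (1 - u ^ 2) := by
          rw [Complex.norm_def, Complex.normSq_mk]
          congr 1
          nlinarith
        refine ⟨(u, Complex.arg z), ⟨⟨hcu, hu1⟩, trivial⟩, ?_⟩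
        have hcos := Complex.cos_arg hz0
        have hsin := Complex.sin_arg z
        simp only [hf]
        have hre : z.re = v := rfl
        have him : z.im = w := rfl
        rw [← habs]
        refine congrArg₂ Prod.mk rfl (congrArg₂ Prod.mk ?_ ?_)
        · rw [hcos, hre]; field_simp
        · rw [hsin, him]; field_simp
  rw [← himg]
  exact hD.image f hcont.continuousOn

private lemma cap_conn_neg1 (c : ℝ) (hc0 : 0 < c) (hc1 : c < 1) :
    IsConnected {p : ℝ × ℝ × ℝ | p.1 ^ 2 + p.2.1 ^ 2 + p.2.2 ^ 2 = 1 ∧ c < -p.1} := by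
  have h := (cap_conn c hc0 hc1).image (fun p : ℝ × ℝ × ℝ => (-p.1, p.2))
    (continuous_fst.neg.prodMk continuous_snd).continuousOn
  convert h using 1
  ext p
  constructor
  · rintro ⟨hs, hc⟩
    obtain ⟨u, v, w⟩ := p
    simp only [Set.mem_setOf_eq] at hs hc
    refine ⟨(-u, v, w), ⟨?_, ?_⟩, by simp⟩
    · simp only [Set.mem_setOf_eq]; nlinarith
    · simpa using hc
  · rintro ⟨⟨a, b, d⟩, ⟨hs, hc⟩, rfl⟩
    simp only [Set.mem_setOf_eq] at hs hc ⊢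
    constructor
    · nlinarith
    · simpa using hc

private lemma cap_conn2 (c : ℝ) (hc0 : 0 < c) (hc1 : c < 1) :
    IsConnected {p : ℝ × ℝ × ℝ | p.1 ^ 2 + p.2.1 ^ 2 + p.2.2 ^ 2 = 1 ∧ c < p.2.1} := by
  have h := (cap_conn c hc0 hc1).image (fun p : ℝ × ℝ × ℝ => (p.2.1, p.1, p.2.2))
    ((continuous_fst.comp continuous_snd).prodMk
      (continuous_fst.prodMk (continuous_snd.comp continuous_snd))).continuousOn
  convert h using 1
  ext p
  constructor
  · rintro ⟨hs, hc⟩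
    obtain ⟨u, v, w⟩ := p
    simp only [Set.mem_setOf_eq] at hs hc
    refine ⟨(v, u, w), ⟨?_, hc⟩, by simp⟩
    simp only [Set.mem_setOf_eq]; nlinarith
  · rintro ⟨⟨a, b, d⟩, ⟨hs, hc⟩, rfl⟩
    simp only [Set.mem_setOf_eq] at hs hc ⊢
    exact ⟨by nlinarith, hc⟩

private lemma cap_conn_neg2 (c : ℝ) (hc0 : 0 < c) (hc1 : c < 1) :
    IsConnected {p : ℝ × ℝ × ℝ | p.1 ^ 2 + p.2.1 ^ 2 + p.2.2 ^ 2 = 1 ∧ c < -p.2.1} := by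
  have h := (cap_conn_neg1 c hc0 hc1).image (fun p : ℝ × ℝ × ℝ => (p.2.1, p.1, p.2.2))
    ((continuous_fst.comp continuous_snd).prodMk
      (continuous_fst.prodMk (continuous_snd.comp continuous_snd))).continuousOn
  convert h using 1
  ext p
  constructor
  · rintro ⟨hs, hc⟩
    obtain ⟨u, v, w⟩ := p
    simp only [Set.mem_setOf_eq] at hs hc
    refine ⟨(v, u, w), ⟨?_, ?_⟩, by simp⟩
    · simp only [Set.mem_setOf_eq]; nlinarith
    · simpa using hc
  · rintro ⟨⟨a, b, d⟩, ⟨hs, hc⟩, rfl⟩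
    simp only [Set.mem_setOf_eq] at hs hc ⊢
    exact ⟨by nlinarith, by simpa using hc⟩

/-- sphere example, behind `rank G₁^{s,t}(S) = 3` for
`1 ≤ s < t < √2`.  Let `S` be the unit sphere in `ℝ³`.  For every `c` with
`1/√2 ≤ c < 1`, the set `{(u,v,w) ∈ S : max(|u|,|v|) > c}` has exactly four
connected components. -/
theorem stmt_12 (c : ℝ) (h0 : 1 / Real.sqrt 2 ≤ c) (h1 : c < 1) :
    Nat.card (ConnectedComponents
      (↥{p : ℝ × ℝ × ℝ | p.1 ^ 2 + p.2.1 ^ 2 + p.2.2 ^ 2 = 1 ∧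
          c < max |p.1| |p.2.1|})) = 4 := by
  have hs2 : (0:ℝ) < Real.sqrt 2 := Real.sqrt_pos.2 (by norm_num)
  have hc0 : 0 < c := lt_of_lt_of_le (by positivity) h0
  have hc2 : (1:ℝ) / 2 ≤ c ^ 2 := by
    have h := mul_self_le_mul_self (by positivity : (0:ℝ) ≤ 1 / Real.sqrt 2) h0
    have hsq : (1 / Real.sqrt 2) * (1 / Real.sqrt 2) = 1 / 2 := by
      rw [div_mul_div_comm, one_mul, Real.mul_self_sqrt (by norm_num : (0:ℝ) ≤ 2)]
    nlinarith
  set T : Set (ℝ × ℝ × ℝ) := {p : ℝ × ℝ × ℝ | p.1 ^ 2 + p.2.1 ^ 2 + p.2.2 ^ 2 = 1 ∧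
      c < max |p.1| |p.2.1|} with hT
  -- the four predicates
  set P : Fin 4 → ℝ × ℝ × ℝ → Prop :=
    ![fun p => c < p.1, fun p => c < -p.1, fun p => c < p.2.1, fun p => c < -p.2.1] with hP
  -- the four base points
  set q : Fin 4 → ℝ × ℝ × ℝ := ![(1,0,0), (-1,0,0), (0,1,0), (0,-1,0)] with hq
  -- the four sets in the subtype
  set A : Fin 4 → Set T := fun i => {x : T | P i (x : ℝ × ℝ × ℝ)} with hA
  have hqT : ∀ i, q i ∈ T := by
    intro i
    fin_cases i <;>
        simp only [hq, hT, Set.mem_setOf_eq, Matrix.cons_val_zero, Matrix.cons_val_one,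
          Matrix.head_cons, Matrix.cons_val_two, Matrix.cons_val_three, Matrix.tail_cons, show (⟨2, by omega⟩ : Fin 4) = 2 from rfl, show (⟨3, by omega⟩ : Fin 4) = 3 from rfl] <;>
      refine ⟨by norm_num, ?_⟩ <;> simp <;>
      first | exact h1 | (norm_num; exact h1) | simpa using h1
  set x : Fin 4 → T := fun i => ⟨q i, hqT i⟩ with hx
  have hxA : ∀ i, x i ∈ A i := by
    intro i
    fin_cases i <;>
      simp only [hA, hx, hq, hP, Set.mem_setOf_eq, Matrix.cons_val_zero, Matrix.cons_val_one,
        Matrix.head_cons, Matrix.cons_val_two, Matrix.cons_val_three, Matrix.tail_cons, show (⟨2, by omega⟩ : Fin 4) = 2 from rfl, show (⟨3, by omega⟩ : Fin 4) = 3 from rfl] <;>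
      norm_num <;> exact h1
  have hcover : ∀ y : T, ∃ i, y ∈ A i := by
    rintro ⟨⟨u, v, w⟩, hsph, hmax⟩
    rcases max_cases |u| |v| with ⟨he, _⟩ | ⟨he, _⟩
    · rw [he] at hmax
      rcases lt_abs.mp hmax with h | h
      · exact ⟨0, h⟩
      · exact ⟨1, h⟩
    · rw [he] at hmax
      rcases lt_abs.mp hmax with h | h
      · exact ⟨2, h⟩
      · exact ⟨3, h⟩
  have hdisj : ∀ i j, ∀ y : T, y ∈ A i → y ∈ A j → i = j := by
    intro i j y
    obtain ⟨⟨u, v, w⟩, hsph, -⟩ := y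
    simp only [hT, Set.mem_setOf_eq] at hsph
    fin_cases i <;> fin_cases j <;> intro hi hj <;> first
      | rfl
      | (exfalso
         simp only [hA, hP, Set.mem_setOf_eq, Matrix.cons_val_zero, Matrix.cons_val_one,
           Matrix.head_cons, Matrix.cons_val_two, Matrix.cons_val_three, Matrix.tail_cons, show (⟨2, by omega⟩ : Fin 4) = 2 from rfl, show (⟨3, by omega⟩ : Fin 4) = 3 from rfl,
           Fin.mk_zero, Fin.mk_one] at hi hj
         nlinarith [hi, hj, hc0, hc2, hsph])
  have hopen : ∀ i, IsOpen (A i) := by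
    intro i
    fin_cases i <;>
      simp only [hA, hP, Matrix.cons_val_zero, Matrix.cons_val_one, Matrix.head_cons,
        Matrix.cons_val_two, Matrix.cons_val_three, Matrix.tail_cons, show (⟨2, by omega⟩ : Fin 4) = 2 from rfl, show (⟨3, by omega⟩ : Fin 4) = 3 from rfl]
    · exact isOpen_Ioi.preimage (continuous_fst.comp continuous_subtype_val)
    · exact isOpen_Ioi.preimage ((continuous_fst.comp continuous_subtype_val).neg)
    · exact isOpen_Ioi.preimage ((continuous_fst.comp continuous_snd).comp continuous_subtype_val)
    · exact isOpen_Ioi.preimage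
        (((continuous_fst.comp continuous_snd).comp continuous_subtype_val).neg)
  have hclosed : ∀ i, IsClosed (A i) := by
    intro i
    rw [← isOpen_compl_iff]
    have : (A i)ᶜ = ⋃ j ∈ ({i}ᶜ : Set (Fin 4)), A j := by
      ext y
      simp only [Set.mem_compl_iff, Set.mem_iUnion, Set.mem_singleton_iff, exists_prop]
      constructor
      · intro hy
        obtain ⟨j, hj⟩ := hcover y
        exact ⟨j, fun h => hy (h ▸ hj), hj⟩
      · rintro ⟨j, hji, hj⟩ hyi
        exact hji (hdisj j i y hj hyi)
    rw [this]
    exact isOpen_biUnion fun j _ => hopen j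
  have key : ∀ i, Subtype.val '' (A i) = {p : ℝ × ℝ × ℝ | p.1 ^ 2 + p.2.1 ^ 2 + p.2.2 ^ 2 = 1 ∧
      P i p} := by
    intro i
    ext p
    constructor
    · rintro ⟨⟨p, hpT⟩, hpa, rfl⟩
      exact ⟨hpT.1, hpa⟩
    · rintro ⟨hsph, hp⟩
      have hpT : p ∈ T := by
        refine ⟨hsph, ?_⟩
        revert hp
        fin_cases i <;>
          simp only [hP, Matrix.cons_val_zero, Matrix.cons_val_one, Matrix.head_cons,
            Matrix.cons_val_two, Matrix.cons_val_three, Matrix.tail_cons, show (⟨2, by omega⟩ : Fin 4) = 2 from rfl, show (⟨3, by omega⟩ : Fin 4) = 3 from rfl] <;>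
        intro hp
        · exact lt_of_lt_of_le hp (le_trans (le_abs_self _) (le_max_left _ _))
        · exact lt_of_lt_of_le hp (le_trans (neg_le_abs _) (le_max_left _ _))
        · exact lt_of_lt_of_le hp (le_trans (le_abs_self _) (le_max_right _ _))
        · exact lt_of_lt_of_le hp (le_trans (neg_le_abs _) (le_max_right _ _))
      exact ⟨⟨p, hpT⟩, hp, rfl⟩
  have hconnA : ∀ i, IsConnected (A i) := by
    intro i
    have hBconn : IsConnected (Subtype.val '' (A i)) := by
      rw [key i]
      fin_cases i <;>
        simp only [hP, Matrix.cons_val_zero, Matrix.cons_val_one, Matrix.head_cons,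
          Matrix.cons_val_two, Matrix.cons_val_three, Matrix.tail_cons, show (⟨2, by omega⟩ : Fin 4) = 2 from rfl, show (⟨3, by omega⟩ : Fin 4) = 3 from rfl]
      · exact cap_conn c hc0 h1
      · exact cap_conn_neg1 c hc0 h1
      · exact cap_conn2 c hc0 h1
      · exact cap_conn_neg2 c hc0 h1
    refine ⟨⟨x i, hxA i⟩, ?_⟩
    exact Topology.IsInducing.subtypeVal.isPreconnected_image.mp hBconn.isPreconnected
  -- connected components
  have hcomp : ∀ i, ∀ y : T, y ∈ A i → connectedComponent y = A i := by
    intro i y hy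
    refine Subset.antisymm
      (IsClopen.connectedComponent_subset ⟨hclosed i, hopen i⟩ hy)
      ((hconnA i).isPreconnected.subset_connectedComponent hy)
  set φ : Fin 4 → ConnectedComponents T := fun i => ConnectedComponents.mk (x i) with hφ
  have hbij : Function.Bijective φ := by
    constructor
    · intro i j hij
      rw [hφ] at hij
      simp only [ConnectedComponents.coe_eq_coe] at hij
      rw [hcomp i (x i) (hxA i), hcomp j (x j) (hxA j)] at hij
      exact hdisj i j (x j) (hij ▸ hxA j) (hxA j)
    · intro y
      obtain ⟨z, rfl⟩ := ConnectedComponents.surjective_coe y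
      obtain ⟨i, hi⟩ := hcover z
      refine ⟨i, ?_⟩
      simp only [hφ, ConnectedComponents.coe_eq_coe]
      rw [hcomp i (x i) (hxA i), hcomp i z hi]
  have := Nat.card_eq_of_bijective φ hbij
  simp only [Nat.card_eq_fintype_card, Fintype.card_fin] at this
  exact this.symm
end

section
/- Let C be the boundary of the cube [−1,1]³ in ℝ³ (the topological frontier of [−1,1]³), with subspace topology. For every c with 0 ≤ c < 1, the set {(u, v, w) ∈ C : max(|u|, |v|) ≤ c} has exactly two connected components. -/
/-- cube boundary example: lower level sets of
`max(|u|,|v|)` below the critical value.  Let `C = ∂([−1,1]³)` be the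
topological frontier of the cube `[−1,1]³ ⊆ ℝ³`.  For every `c` with
`0 ≤ c < 1`, the set `{(u,v,w) ∈ C : max(|u|,|v|) ≤ c}` has exactly two
connected components. -/
theorem stmt_13 (c : ℝ) (h0 : 0 ≤ c) (h1 : c < 1) :
    Nat.card (ConnectedComponents
      (↥{p : ℝ × ℝ × ℝ |
          p ∈ frontier (Set.Icc ((-1, -1, -1) : ℝ × ℝ × ℝ) (1, 1, 1)) ∧
          max |p.1| |p.2.1| ≤ c})) = 2 := by
  set S : Set (ℝ × ℝ × ℝ) := {p : ℝ × ℝ × ℝ |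
      p ∈ frontier (Set.Icc ((-1, -1, -1) : ℝ × ℝ × ℝ) (1, 1, 1)) ∧
      max |p.1| |p.2.1| ≤ c} with hS
  -- interior of the cube
  have hint : interior (Set.Icc ((-1, -1, -1) : ℝ × ℝ × ℝ) (1, 1, 1)) =
      Set.Ioo (-1 : ℝ) 1 ×ˢ (Set.Ioo (-1 : ℝ) 1 ×ˢ Set.Ioo (-1 : ℝ) 1) := by
    rw [Set.Icc_prod_eq, Set.Icc_prod_eq, interior_prod_eq, interior_prod_eq,
      interior_Icc]
  -- membership characterization
  have hmem : ∀ u v w : ℝ, ((u, v, w) ∈ S ↔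
      (|u| ≤ c ∧ |v| ≤ c ∧ (w = 1 ∨ w = -1))) := by
    intro u v w
    rw [hS]
    simp only [Set.mem_setOf_eq, isClosed_Icc.frontier_eq, hint, Set.mem_diff,
      Set.mem_Icc, Set.mem_prod, Set.mem_Ioo, Prod.le_def, max_le_iff, abs_le]
    constructor
    · rintro ⟨⟨⟨⟨h1u, h1v, h1w⟩, h2u, h2v, h2w⟩, hn⟩, hu, hv⟩
      have hu' : (-1 : ℝ) < u ∧ u < 1 := ⟨by linarith [hu.1], by linarith [hu.2]⟩
      have hv' : (-1 : ℝ) < v ∧ v < 1 := ⟨by linarith [hv.1], by linarith [hv.2]⟩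
      have hw' : ¬((-1 : ℝ) < w ∧ w < 1) := fun h => hn ⟨hu', hv', h⟩
      refine ⟨hu, hv, ?_⟩
      by_contra hcon
      push_neg at hcon
      exact hw' ⟨lt_of_le_of_ne h1w (Ne.symm hcon.2), lt_of_le_of_ne h2w hcon.1⟩
    · rintro ⟨hu, hv, hw⟩
      have h1w : (-1 : ℝ) ≤ w := by rcases hw with h | h <;> simp [h]
      have h2w : w ≤ 1 := by rcases hw with h | h <;> simp [h]
      refine ⟨⟨⟨⟨by linarith [hu.1], by linarith [hv.1], h1w⟩,
        by linarith [hu.2], by linarith [hv.2], h2w⟩, ?_⟩, hu, hv⟩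
      rintro ⟨_, _, hwIoo⟩
      rcases hw with h | h <;> rw [h] at hwIoo <;> linarith [hwIoo.1, hwIoo.2]
  -- the two faces
  set A : Set (ℝ × ℝ × ℝ) := {q : ℝ × ℝ × ℝ | |q.1| ≤ c ∧ |q.2.1| ≤ c ∧ q.2.2 = 1} with hA
  set B : Set (ℝ × ℝ × ℝ) := {q : ℝ × ℝ × ℝ | |q.1| ≤ c ∧ |q.2.1| ≤ c ∧ q.2.2 = -1} with hB
  have hAim : A = (fun q : ℝ × ℝ => (q.1, q.2, (1 : ℝ))) ''
      (Set.Icc (-c) c ×ˢ Set.Icc (-c) c) := by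
    ext ⟨u, v, w⟩
    simp only [hA, Set.mem_setOf_eq, Set.mem_image, Set.mem_prod, Set.mem_Icc,
      Prod.mk.injEq, Prod.exists, abs_le]
    constructor
    · rintro ⟨hu, hv, rfl⟩
      exact ⟨u, v, ⟨hu, hv⟩, rfl, rfl, rfl⟩
    · rintro ⟨a, b, ⟨ha, hb⟩, rfl, rfl, rfl⟩
      exact ⟨ha, hb, rfl⟩
  have hBim : B = (fun q : ℝ × ℝ => (q.1, q.2, (-1 : ℝ))) ''
      (Set.Icc (-c) c ×ˢ Set.Icc (-c) c) := by
    ext ⟨u, v, w⟩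
    simp only [hB, Set.mem_setOf_eq, Set.mem_image, Set.mem_prod, Set.mem_Icc,
      Prod.mk.injEq, Prod.exists, abs_le]
    constructor
    · rintro ⟨hu, hv, rfl⟩
      exact ⟨u, v, ⟨hu, hv⟩, rfl, rfl, rfl⟩
    · rintro ⟨a, b, ⟨ha, hb⟩, rfl, rfl, rfl⟩
      exact ⟨ha, hb, rfl⟩
  have hApc : IsPreconnected A := by
    rw [hAim]
    exact ((isPreconnected_Icc.prod isPreconnected_Icc).image _
      (Continuous.continuousOn (by fun_prop)))
  have hBpc : IsPreconnected B := by
    rw [hBim]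
    exact ((isPreconnected_Icc.prod isPreconnected_Icc).image _
      (Continuous.continuousOn (by fun_prop)))
  have hAS : A ⊆ S := by
    rintro ⟨u, v, w⟩ ⟨hu, hv, hw⟩
    exact (hmem u v w).mpr ⟨hu, hv, Or.inl hw⟩
  have hBS : B ⊆ S := by
    rintro ⟨u, v, w⟩ ⟨hu, hv, hw⟩
    exact (hmem u v w).mpr ⟨hu, hv, Or.inr hw⟩
  -- preconnectedness inside the subtype
  have hApc' : IsPreconnected ((Subtype.val : S → ℝ × ℝ × ℝ) ⁻¹' A) := by
    rw [← Topology.IsInducing.subtypeVal.isPreconnected_image,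
      Subtype.image_preimage_coe, Set.inter_eq_self_of_subset_right hAS]
    exact hApc
  have hBpc' : IsPreconnected ((Subtype.val : S → ℝ × ℝ × ℝ) ⁻¹' B) := by
    rw [← Topology.IsInducing.subtypeVal.isPreconnected_image,
      Subtype.image_preimage_coe, Set.inter_eq_self_of_subset_right hBS]
    exact hBpc
  -- the continuous sign map
  set g : S → Bool := fun p => decide ((0 : ℝ) < p.val.2.2) with hg
  have hgt : ∀ p : S, (g p = true ↔ p.val ∈ A) := by
    rintro ⟨⟨u, v, w⟩, hp⟩
    obtain ⟨hu, hv, hw⟩ := (hmem u v w).mp hp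
    simp only [hg, hA, decide_eq_true_eq, Set.mem_setOf_eq]
    rcases hw with h | h <;> subst h
    · exact ⟨fun _ => ⟨hu, hv, rfl⟩, fun _ => by norm_num⟩
    · constructor
      · intro h'; norm_num at h'
      · rintro ⟨-, -, h'⟩; norm_num at h'
  have hgf : ∀ p : S, (g p = false ↔ p.val ∈ B) := by
    rintro ⟨⟨u, v, w⟩, hp⟩
    obtain ⟨hu, hv, hw⟩ := (hmem u v w).mp hp
    simp only [hg, hB, decide_eq_false_iff_not, Set.mem_setOf_eq, not_lt]
    rcases hw with h | h <;> subst h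
    · constructor
      · intro h'; norm_num at h'
      · rintro ⟨-, -, h'⟩; norm_num at h'
    · exact ⟨fun _ => ⟨hu, hv, rfl⟩, fun _ => by norm_num⟩
  have hgc : Continuous g := by
    rw [continuous_discrete_rng]
    intro b
    cases b
    · have : g ⁻¹' {false} = (Subtype.val : S → ℝ × ℝ × ℝ) ⁻¹' {q | q.2.2 < 0} := by
        ext p
        simp only [Set.mem_preimage, Set.mem_singleton_iff, Set.mem_setOf_eq]
        rw [hgf p]
        obtain ⟨⟨u, v, w⟩, hp⟩ := p
        obtain ⟨hu, hv, hw⟩ := (hmem u v w).mp hp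
        simp only [hB, Set.mem_setOf_eq]
        rcases hw with h | h <;> subst h
        · constructor
          · rintro ⟨-, -, h'⟩; norm_num at h'
          · intro h'; norm_num at h'
        · exact ⟨fun _ => by norm_num, fun _ => ⟨hu, hv, rfl⟩⟩
      rw [this]
      exact (isOpen_lt (by fun_prop) continuous_const).preimage continuous_subtype_val
    · have : g ⁻¹' {true} = (Subtype.val : S → ℝ × ℝ × ℝ) ⁻¹' {q | 0 < q.2.2} := by
        ext p
        simp only [Set.mem_preimage, Set.mem_singleton_iff, Set.mem_setOf_eq, hg,
          decide_eq_true_eq]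
      rw [this]
      exact (isOpen_lt continuous_const (by fun_prop)).preimage continuous_subtype_val
  -- the induced map on connected components
  set e : ConnectedComponents S → Bool := hgc.connectedComponentsLift with he
  have hbij : Function.Bijective e := by
    constructor
    · intro x y hxy
      obtain ⟨a, rfl⟩ := ConnectedComponents.surjective_coe x
      obtain ⟨b, rfl⟩ := ConnectedComponents.surjective_coe y
      rw [he, hgc.connectedComponentsLift_apply_coe,
        hgc.connectedComponentsLift_apply_coe] at hxy
      rw [ConnectedComponents.coe_eq_coe]
      cases hga : g a with
      | true =>
        have hgb : g b = true := by rw [← hxy]; exact hga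
        have ha : a ∈ (Subtype.val : S → ℝ × ℝ × ℝ) ⁻¹' A := (hgt a).mp hga
        have hb : b ∈ (Subtype.val : S → ℝ × ℝ × ℝ) ⁻¹' A := (hgt b).mp hgb
        exact connectedComponent_eq (hApc'.subset_connectedComponent ha hb)
      | false =>
        have hgb : g b = false := by rw [← hxy]; exact hga
        have ha : a ∈ (Subtype.val : S → ℝ × ℝ × ℝ) ⁻¹' B := (hgf a).mp hga
        have hb : b ∈ (Subtype.val : S → ℝ × ℝ × ℝ) ⁻¹' B := (hgf b).mp hgb
        exact connectedComponent_eq (hBpc'.subset_connectedComponent ha hb)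
    · intro b
      cases b
      · refine ⟨ConnectedComponents.mk ⟨(0, 0, -1),
          (hmem 0 0 (-1)).mpr ⟨by simpa using h0, by simpa using h0, Or.inr rfl⟩⟩, ?_⟩
        rw [he, hgc.connectedComponentsLift_apply_coe]
        simp [hg]
      · refine ⟨ConnectedComponents.mk ⟨(0, 0, 1),
          (hmem 0 0 1).mpr ⟨by simpa using h0, by simpa using h0, Or.inl rfl⟩⟩, ?_⟩
        rw [he, hgc.connectedComponentsLift_apply_coe]
        simp [hg]
  rw [Nat.card_eq_of_bijective e hbij]
  simp
end

section
/- Let S = {(u, v, w) ∈ ℝ³ : u² + v² + w² = 1} and C = ∂([−1,1]³) ⊆ ℝ³, each with the subspace topology. For every a ∈ ℝ, the lower level sets {(u,v,w) ∈ S : |u| ≤ a} and {(u,v,w) ∈ C : |u| ≤ a} are each preconnected (empty or connected), and likewise the sets {(u,v,w) ∈ S : |v| ≤ a} and {(u,v,w) ∈ C : |v| ≤ a} are each preconnected. -/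
private lemma mem_front (p : ℝ×ℝ×ℝ) : p ∈ frontier (Set.Icc ((-1,-1,-1):ℝ×ℝ×ℝ) (1,1,1)) ↔
    (|p.1| ≤ 1 ∧ |p.2.1| ≤ 1 ∧ |p.2.2| ≤ 1) ∧ (|p.1| = 1 ∨ |p.2.1| = 1 ∨ |p.2.2| = 1) := by
  rw [isClosed_Icc.frontier_eq, Set.Icc_prod_eq, Set.Icc_prod_eq, interior_prod_eq,
    interior_prod_eq, interior_Icc]
  obtain ⟨u, v, w⟩ := p
  simp only [Set.mem_diff, Set.mem_prod, Set.mem_Icc, Set.mem_Ioo, abs_le]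
  constructor
  · rintro ⟨⟨h1, h2, h3⟩, h4⟩
    refine ⟨⟨h1, h2, h3⟩, ?_⟩
    by_contra h
    push_neg at h
    obtain ⟨a1, a2, a3⟩ := h
    apply h4
    refine ⟨?_, ?_, ?_⟩ <;> constructor <;>
      [rcases abs_lt.mp (lt_of_le_of_ne (abs_le.mpr h1) a1) with ⟨l, r⟩;
       rcases abs_lt.mp (lt_of_le_of_ne (abs_le.mpr h1) a1) with ⟨l, r⟩;
       rcases abs_lt.mp (lt_of_le_of_ne (abs_le.mpr h2) a2) with ⟨l, r⟩;
       rcases abs_lt.mp (lt_of_le_of_ne (abs_le.mpr h2) a2) with ⟨l, r⟩;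
       rcases abs_lt.mp (lt_of_le_of_ne (abs_le.mpr h3) a3) with ⟨l, r⟩;
       rcases abs_lt.mp (lt_of_le_of_ne (abs_le.mpr h3) a3) with ⟨l, r⟩] <;> linarith
  · rintro ⟨⟨h1, h2, h3⟩, h4⟩
    refine ⟨⟨h1, h2, h3⟩, fun ⟨⟨a1,a2⟩,⟨b1,b2⟩,c1,c2⟩ => ?_⟩
    rcases h4 with h | h | h <;>
      · rw [abs_eq (by norm_num)] at h; rcases h with h | h <;> linarith

private lemma mem_front' (p : ℝ×ℝ×ℝ) : p ∈ frontier (Set.Icc ((-1,-1,-1):ℝ×ℝ×ℝ) (1,1,1)) ↔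
    ((-1 ≤ p.1 ∧ p.1 ≤ 1) ∧ (-1 ≤ p.2.1 ∧ p.2.1 ≤ 1) ∧ (-1 ≤ p.2.2 ∧ p.2.2 ≤ 1)) ∧
    (p.1 = 1 ∨ p.1 = -1 ∨ p.2.1 = 1 ∨ p.2.1 = -1 ∨ p.2.2 = 1 ∨ p.2.2 = -1) := by
  rw [mem_front]
  simp only [abs_le, abs_eq (zero_le_one' ℝ)]
  tauto

private lemma icc_preconn (p q : ℝ×ℝ×ℝ) : IsPreconnected (Set.Icc p q) :=
  (convex_Icc p q).isPreconnected

private lemma sphere_band (a : ℝ) (ha : 0 ≤ a) :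
    IsPreconnected {p : ℝ × ℝ × ℝ | p.1 ^ 2 + p.2.1 ^ 2 + p.2.2 ^ 2 = 1 ∧ |p.1| ≤ a} := by
  set b := min a 1 with hb
  have hb0 : 0 ≤ b := le_min ha zero_le_one
  have hkey : {p : ℝ × ℝ × ℝ | p.1 ^ 2 + p.2.1 ^ 2 + p.2.2 ^ 2 = 1 ∧ |p.1| ≤ a} =
      (fun q : ℝ × ℝ => (q.1, Real.sqrt (1 - q.1^2) * Real.cos q.2,
        Real.sqrt (1 - q.1^2) * Real.sin q.2)) '' (Set.Icc (-b) b ×ˢ Set.univ) := by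
    ext ⟨u, v, w⟩
    simp only [Set.mem_image, Set.mem_setOf_eq, Set.mem_prod, Set.mem_Icc, Set.mem_univ,
      and_true, Prod.exists, Prod.mk.injEq]
    constructor
    · rintro ⟨h1, h2⟩
      have hu2 : u ^ 2 ≤ 1 := by nlinarith [sq_nonneg v, sq_nonneg w]
      have hu1 : |u| ≤ 1 := (sq_le_one_iff_abs_le_one _).mp hu2
      have hub : -b ≤ u ∧ u ≤ b := abs_le.mp (le_min h2 hu1)
      have hvw : v ^ 2 + w ^ 2 = 1 - u ^ 2 := by linarith
      by_cases hz0 : v = 0 ∧ w = 0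
      · refine ⟨u, 0, ⟨hub.1, hub.2⟩, rfl, ?_, ?_⟩ <;>
        · rw [show (1:ℝ) - u^2 = 0 by rw [← hvw, hz0.1, hz0.2]; ring]
          simp [hz0.1, hz0.2]
      · set z : ℂ := ⟨v, w⟩ with hz
        have hzne : z ≠ 0 := by
          intro h
          rw [Complex.ext_iff] at h
          exact hz0 ⟨h.1, h.2⟩
        have habs : ‖z‖ = Real.sqrt (1 - u ^ 2) := by
          rw [Complex.norm_def, Complex.normSq_mk, ← hvw]; ring_nf
        have hane : ‖z‖ ≠ 0 := by simpa using hzne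
        refine ⟨u, z.arg, ⟨hub.1, hub.2⟩, rfl, ?_, ?_⟩
        · rw [← habs, Complex.cos_arg hzne, mul_div_cancel₀ _ hane]
        · rw [← habs, Complex.sin_arg, mul_div_cancel₀ _ hane]
    · rintro ⟨t, θ, ⟨ht1, ht2⟩, he1, he2, he3⟩
      have ht : |t| ≤ b := abs_le.mpr ⟨ht1, ht2⟩
      have ht1' : t ^ 2 ≤ 1 := (sq_le_one_iff_abs_le_one _).mpr (ht.trans (min_le_right a 1))
      have hsq : Real.sqrt (1 - t ^ 2) ^ 2 = 1 - t ^ 2 := Real.sq_sqrt (by linarith)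
      constructor
      · rw [← he1, ← he2, ← he3]
        have := Real.sin_sq_add_cos_sq θ
        nlinarith [hsq]
      · rw [← he1]; exact ht.trans (min_le_left a 1)
  rw [hkey]
  refine (isPreconnected_Icc.prod isPreconnected_univ).image _ (Continuous.continuousOn ?_)
  fun_prop

private lemma cube_band (a : ℝ) (ha : 0 ≤ a) (ha1 : a < 1) :
    IsPreconnected {p : ℝ × ℝ × ℝ |
        p ∈ frontier (Set.Icc ((-1, -1, -1) : ℝ × ℝ × ℝ) (1, 1, 1)) ∧ |p.1| ≤ a} := by
  have hkey : {p : ℝ × ℝ × ℝ |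
      p ∈ frontier (Set.Icc ((-1, -1, -1) : ℝ × ℝ × ℝ) (1, 1, 1)) ∧ |p.1| ≤ a} =
      ((Set.Icc ((-a,1,-1):ℝ×ℝ×ℝ) (a,1,1) ∪ Set.Icc ((-a,-1,1):ℝ×ℝ×ℝ) (a,1,1)) ∪
        Set.Icc ((-a,-1,-1):ℝ×ℝ×ℝ) (a,-1,1)) ∪ Set.Icc ((-a,-1,-1):ℝ×ℝ×ℝ) (a,1,-1) := by
    ext ⟨u, v, w⟩
    simp only [Set.mem_setOf_eq, mem_front', Set.mem_union, Set.mem_Icc, Prod.mk_le_mk, abs_le]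
    constructor
    · rintro ⟨⟨⟨⟨hu1,hu2⟩,⟨hv1,hv2⟩,hw1,hw2⟩, hd⟩, ha1', ha2'⟩
      rcases hd with h|h|h|h|h|h
      · linarith
      · linarith
      · exact Or.inl (Or.inl (Or.inl ⟨⟨ha1', by linarith, hw1⟩, ha2', by linarith, hw2⟩))
      · exact Or.inl (Or.inr ⟨⟨ha1', hv1, hw1⟩, ha2', by linarith, hw2⟩)
      · exact Or.inl (Or.inl (Or.inr ⟨⟨ha1', hv1, by linarith⟩, ha2', hv2, hw2⟩))
      · exact Or.inr ⟨⟨ha1', hv1, hw1⟩, ha2', hv2, by linarith⟩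
    · rintro (((⟨⟨h1,h2,h3⟩,h4,h5,h6⟩|⟨⟨h1,h2,h3⟩,h4,h5,h6⟩)|⟨⟨h1,h2,h3⟩,h4,h5,h6⟩)|⟨⟨h1,h2,h3⟩,h4,h5,h6⟩)
      · exact ⟨⟨⟨⟨by linarith, by linarith⟩, ⟨by linarith, h5⟩, h3, h6⟩,
          Or.inr (Or.inr (Or.inl (by linarith)))⟩, by linarith, h4⟩
      · exact ⟨⟨⟨⟨by linarith, by linarith⟩, ⟨h2, h5⟩, by linarith, h6⟩,
          Or.inr (Or.inr (Or.inr (Or.inr (Or.inl (by linarith)))))⟩, by linarith, h4⟩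
      · exact ⟨⟨⟨⟨by linarith, by linarith⟩, ⟨h2, by linarith⟩, h3, h6⟩,
          Or.inr (Or.inr (Or.inr (Or.inl (by linarith))))⟩, by linarith, h4⟩
      · exact ⟨⟨⟨⟨by linarith, by linarith⟩, ⟨h2, h5⟩, h3, by linarith⟩,
          Or.inr (Or.inr (Or.inr (Or.inr (Or.inr (by linarith)))))⟩, by linarith, h4⟩
  rw [hkey]
  refine IsPreconnected.union ((0:ℝ),(-1:ℝ),(-1:ℝ)) ?_ ?_
    (IsPreconnected.union ((0:ℝ),(-1:ℝ),(1:ℝ)) ?_ ?_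
      (IsPreconnected.union ((0:ℝ),(1:ℝ),(1:ℝ)) ?_ ?_ (icc_preconn _ _) (icc_preconn _ _))
      (icc_preconn _ _)) (icc_preconn _ _)
  · right
    simp only [Set.mem_Icc, Prod.mk_le_mk]
    exact ⟨⟨by linarith, by norm_num⟩, by linarith, by norm_num⟩
  · simp only [Set.mem_Icc, Prod.mk_le_mk]
    exact ⟨⟨by linarith, by norm_num⟩, by linarith, by norm_num⟩
  · right
    simp only [Set.mem_Icc, Prod.mk_le_mk]
    exact ⟨⟨by linarith, by norm_num⟩, by linarith, by norm_num⟩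
  · simp only [Set.mem_Icc, Prod.mk_le_mk]
    exact ⟨⟨by linarith, by norm_num⟩, by linarith, by norm_num⟩
  · simp only [Set.mem_Icc, Prod.mk_le_mk]
    exact ⟨⟨by linarith, by norm_num⟩, by linarith, by norm_num⟩
  · simp only [Set.mem_Icc, Prod.mk_le_mk]
    exact ⟨⟨by linarith, by norm_num⟩, by linarith, by norm_num⟩

private lemma cube_full (a : ℝ) (ha1 : 1 ≤ a) :
    IsPreconnected {p : ℝ × ℝ × ℝ |
        p ∈ frontier (Set.Icc ((-1, -1, -1) : ℝ × ℝ × ℝ) (1, 1, 1)) ∧ |p.1| ≤ a} := by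
  have hkey : {p : ℝ × ℝ × ℝ |
      p ∈ frontier (Set.Icc ((-1, -1, -1) : ℝ × ℝ × ℝ) (1, 1, 1)) ∧ |p.1| ≤ a} =
      (((((Set.Icc ((-1,1,-1):ℝ×ℝ×ℝ) (1,1,1) ∪ Set.Icc ((-1,-1,1):ℝ×ℝ×ℝ) (1,1,1)) ∪
        Set.Icc ((-1,-1,-1):ℝ×ℝ×ℝ) (1,-1,1)) ∪ Set.Icc ((-1,-1,-1):ℝ×ℝ×ℝ) (1,1,-1)) ∪
        Set.Icc ((1,-1,-1):ℝ×ℝ×ℝ) (1,1,1)) ∪ Set.Icc ((-1,-1,-1):ℝ×ℝ×ℝ) (-1,1,1)) := by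
    ext ⟨u, v, w⟩
    simp only [Set.mem_setOf_eq, mem_front', Set.mem_union, Set.mem_Icc, Prod.mk_le_mk, abs_le]
    constructor
    · rintro ⟨⟨⟨⟨hu1,hu2⟩,⟨hv1,hv2⟩,hw1,hw2⟩, hd⟩, _, _⟩
      rcases hd with h|h|h|h|h|h
      · exact Or.inl (Or.inr ⟨⟨by linarith, hv1, hw1⟩, hu2, hv2, hw2⟩)
      · exact Or.inr ⟨⟨hu1, hv1, hw1⟩, by linarith, hv2, hw2⟩
      · exact Or.inl (Or.inl (Or.inl (Or.inl (Or.inl ⟨⟨hu1, by linarith, hw1⟩, hu2, by linarith, hw2⟩))))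
      · exact Or.inl (Or.inl (Or.inl (Or.inr ⟨⟨hu1, hv1, hw1⟩, hu2, by linarith, hw2⟩)))
      · exact Or.inl (Or.inl (Or.inl (Or.inl (Or.inr ⟨⟨hu1, hv1, by linarith⟩, hu2, hv2, hw2⟩))))
      · exact Or.inl (Or.inl (Or.inr ⟨⟨hu1, hv1, hw1⟩, hu2, hv2, by linarith⟩))
    · rintro ((((((⟨⟨h1,h2,h3⟩,h4,h5,h6⟩|⟨⟨h1,h2,h3⟩,h4,h5,h6⟩)|⟨⟨h1,h2,h3⟩,h4,h5,h6⟩)|⟨⟨h1,h2,h3⟩,h4,h5,h6⟩)|⟨⟨h1,h2,h3⟩,h4,h5,h6⟩)|⟨⟨h1,h2,h3⟩,h4,h5,h6⟩))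
      · exact ⟨⟨⟨⟨h1, h4⟩, ⟨by linarith, h5⟩, h3, h6⟩,
          Or.inr (Or.inr (Or.inl (by linarith)))⟩, by linarith, by linarith⟩
      · exact ⟨⟨⟨⟨h1, h4⟩, ⟨h2, h5⟩, by linarith, h6⟩,
          Or.inr (Or.inr (Or.inr (Or.inr (Or.inl (by linarith)))))⟩, by linarith, by linarith⟩
      · exact ⟨⟨⟨⟨h1, h4⟩, ⟨h2, by linarith⟩, h3, h6⟩,
          Or.inr (Or.inr (Or.inr (Or.inl (by linarith))))⟩, by linarith, by linarith⟩
      · exact ⟨⟨⟨⟨h1, h4⟩, ⟨h2, h5⟩, h3, by linarith⟩,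
          Or.inr (Or.inr (Or.inr (Or.inr (Or.inr (by linarith)))))⟩, by linarith, by linarith⟩
      · exact ⟨⟨⟨⟨by linarith, h4⟩, ⟨h2, h5⟩, h3, h6⟩,
          Or.inl (by linarith)⟩, by linarith, by linarith⟩
      · exact ⟨⟨⟨⟨h1, by linarith⟩, ⟨h2, h5⟩, h3, h6⟩,
          Or.inr (Or.inl (by linarith))⟩, by linarith, by linarith⟩
  rw [hkey]
  refine IsPreconnected.union ((-1:ℝ),(1:ℝ),(0:ℝ)) ?_ ?_
    (IsPreconnected.union ((1:ℝ),(1:ℝ),(0:ℝ)) ?_ ?_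
      (IsPreconnected.union ((0:ℝ),(-1:ℝ),(-1:ℝ)) ?_ ?_
        (IsPreconnected.union ((0:ℝ),(-1:ℝ),(1:ℝ)) ?_ ?_
          (IsPreconnected.union ((0:ℝ),(1:ℝ),(1:ℝ)) ?_ ?_
            (icc_preconn _ _) (icc_preconn _ _))
          (icc_preconn _ _))
        (icc_preconn _ _))
      (icc_preconn _ _))
    (icc_preconn _ _)
  · left; left; left; left
    simp only [Set.mem_Icc, Prod.mk_le_mk]; norm_num
  · simp only [Set.mem_Icc, Prod.mk_le_mk]; norm_num
  · left; left; left
    simp only [Set.mem_Icc, Prod.mk_le_mk]; norm_num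
  · simp only [Set.mem_Icc, Prod.mk_le_mk]; norm_num
  · right
    simp only [Set.mem_Icc, Prod.mk_le_mk]; norm_num
  · simp only [Set.mem_Icc, Prod.mk_le_mk]; norm_num
  · right
    simp only [Set.mem_Icc, Prod.mk_le_mk]; norm_num
  · simp only [Set.mem_Icc, Prod.mk_le_mk]; norm_num
  · simp only [Set.mem_Icc, Prod.mk_le_mk]; norm_num
  · simp only [Set.mem_Icc, Prod.mk_le_mk]; norm_num

private lemma cube_u (a : ℝ) (ha : 0 ≤ a) :
    IsPreconnected {p : ℝ × ℝ × ℝ |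
        p ∈ frontier (Set.Icc ((-1, -1, -1) : ℝ × ℝ × ℝ) (1, 1, 1)) ∧ |p.1| ≤ a} := by
  rcases lt_or_ge a 1 with h | h
  · exact cube_band a ha h
  · exact cube_full a h

private def sw : ℝ × ℝ × ℝ → ℝ × ℝ × ℝ := fun p => (p.2.1, p.1, p.2.2)

private lemma sw_cont : Continuous sw := by unfold sw; fun_prop

private lemma sphere_v_eq (a : ℝ) :
    {p : ℝ × ℝ × ℝ | p.1 ^ 2 + p.2.1 ^ 2 + p.2.2 ^ 2 = 1 ∧ |p.2.1| ≤ a} =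
      sw '' {p : ℝ × ℝ × ℝ | p.1 ^ 2 + p.2.1 ^ 2 + p.2.2 ^ 2 = 1 ∧ |p.1| ≤ a} := by
  ext ⟨u, v, w⟩
  constructor
  · rintro ⟨h1, h2⟩
    exact ⟨(v, u, w), ⟨by simp only [Set.mem_setOf_eq] at h1 ⊢; linarith, h2⟩, rfl⟩
  · rintro ⟨⟨x, y, z⟩, ⟨h1, h2⟩, he⟩
    obtain ⟨e1, e2, e3⟩ : y = u ∧ x = v ∧ z = w := by
      simpa [sw, Prod.ext_iff] using he
    subst e1; subst e2; subst e3
    simp only [Set.mem_setOf_eq] at h1 h2 ⊢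
    exact ⟨by linarith, h2⟩

private lemma cube_v_eq (a : ℝ) :
    {p : ℝ × ℝ × ℝ |
        p ∈ frontier (Set.Icc ((-1, -1, -1) : ℝ × ℝ × ℝ) (1, 1, 1)) ∧ |p.2.1| ≤ a} =
      sw '' {p : ℝ × ℝ × ℝ |
        p ∈ frontier (Set.Icc ((-1, -1, -1) : ℝ × ℝ × ℝ) (1, 1, 1)) ∧ |p.1| ≤ a} := by
  ext ⟨u, v, w⟩
  constructor
  · rintro ⟨h1, h2⟩
    refine ⟨(v, u, w), ⟨?_, h2⟩, rfl⟩
    rw [mem_front'] at h1 ⊢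
    simp only at h1 ⊢
    tauto
  · rintro ⟨⟨x, y, z⟩, ⟨h1, h2⟩, he⟩
    obtain ⟨e1, e2, e3⟩ : y = u ∧ x = v ∧ z = w := by
      simpa [sw, Prod.ext_iff] using he
    subst e1; subst e2; subst e3
    refine ⟨?_, h2⟩
    rw [mem_front'] at h1 ⊢
    simp only at h1 ⊢
    tauto

private lemma empty_band (a : ℝ) (ha : a < 0) (P : ℝ × ℝ × ℝ → Prop)
    (f : ℝ × ℝ × ℝ → ℝ) :
    IsPreconnected {p : ℝ × ℝ × ℝ | P p ∧ |f p| ≤ a} := by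
  have : {p : ℝ × ℝ × ℝ | P p ∧ |f p| ≤ a} = ∅ := by
    ext p
    simp only [Set.mem_setOf_eq, Set.mem_empty_iff_false, iff_false, not_and]
    intro _ h
    linarith [abs_nonneg (f p)]
  rw [this]
  exact isPreconnected_empty

/-- the single components `f₁ = |u|`, `f₂ = |v|` cannot
distinguish the sphere from the cube boundary in degree 0.
Let `S` be the unit sphere in `ℝ³` and `C = ∂([−1,1]³)`.  For every `a ∈ ℝ`,
the lower level sets `{P ∈ S : |u| ≤ a}`, `{P ∈ C : |u| ≤ a}`,
`{P ∈ S : |v| ≤ a}` and `{P ∈ C : |v| ≤ a}` are each preconnected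
(empty or connected). -/
theorem stmt_15 (a : ℝ) :
    IsPreconnected {p : ℝ × ℝ × ℝ |
        p.1 ^ 2 + p.2.1 ^ 2 + p.2.2 ^ 2 = 1 ∧ |p.1| ≤ a} ∧
    IsPreconnected {p : ℝ × ℝ × ℝ |
        p ∈ frontier (Set.Icc ((-1, -1, -1) : ℝ × ℝ × ℝ) (1, 1, 1)) ∧
        |p.1| ≤ a} ∧
    IsPreconnected {p : ℝ × ℝ × ℝ |
        p.1 ^ 2 + p.2.1 ^ 2 + p.2.2 ^ 2 = 1 ∧ |p.2.1| ≤ a} ∧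
    IsPreconnected {p : ℝ × ℝ × ℝ |
        p ∈ frontier (Set.Icc ((-1, -1, -1) : ℝ × ℝ × ℝ) (1, 1, 1)) ∧
        |p.2.1| ≤ a} := by
  rcases lt_or_ge a 0 with ha | ha
  · exact ⟨empty_band a ha _ _, empty_band a ha _ _, empty_band a ha _ _,
      empty_band a ha _ _⟩
  · refine ⟨sphere_band a ha, cube_u a ha, ?_, ?_⟩
    · rw [sphere_v_eq]
      exact (sphere_band a ha).image sw sw_cont.continuousOn
    · rw [cube_v_eq]
      exact (cube_u a ha).image sw sw_cont.continuousOn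
end

section
/- Let S = {(u, v, w) ∈ ℝ³ : u² + v² + w² = 1} with the subspace topology. For every c with 0 ≤ c < 1/√2, the set {(u, v, w) ∈ S : |u| ≤ 1/√2 and |v| ≤ c} has exactly two connected components, while for every c ≥ 1/√2 the set {(u, v, w) ∈ S : |u| ≤ 1/√2 and |v| ≤ c} is connected. -/
open Set

private lemma disk_convex : Convex ℝ {p : ℝ × ℝ | p.1 ^ 2 + p.2 ^ 2 ≤ 1} := by
  intro x hx y hy s t hs ht hst
  simp only [mem_setOf_eq] at hx hy ⊢
  simp only [Prod.fst_add, Prod.snd_add, Prod.smul_fst, Prod.smul_snd, smul_eq_mul]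
  have key : 0 ≤ s * t * ((x.1 - y.1) ^ 2 + (x.2 - y.2) ^ 2) := by positivity
  nlinarith [key, mul_nonneg hs (by linarith : (0:ℝ) ≤ 1 - (x.1 ^ 2 + x.2 ^ 2)),
    mul_nonneg ht (by linarith : (0:ℝ) ≤ 1 - (y.1 ^ 2 + y.2 ^ 2))]

private lemma gcont (s : ℝ) :
    Continuous (fun p : ℝ × ℝ => (p.1, p.2, s * Real.sqrt (1 - p.1 ^ 2 - p.2 ^ 2))) := by
  fun_prop

private lemma a_sq : (1 / Real.sqrt 2 : ℝ) ^ 2 = 1 / 2 := by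
  rw [div_pow, one_pow, Real.sq_sqrt (by norm_num : (0:ℝ) ≤ 2)]

private lemma a_pos : (0:ℝ) < 1 / Real.sqrt 2 := by positivity

private lemma sq_le_of_abs {x y : ℝ} (h : |x| ≤ y) : x ^ 2 ≤ y ^ 2 := by
  have := pow_le_pow_left₀ (abs_nonneg x) h 2
  rwa [sq_abs] at this

/-- Image characterization for the two hemispherical pieces in part 1. -/
private lemma himg_aux (a c : ℝ) (ha2 : a ^ 2 = 1 / 2) (hc2 : c ^ 2 < 1 / 2)
    (s : ℝ) (hs : s = 1 ∨ s = -1) :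
    (fun p : ℝ × ℝ => (p.1, p.2, s * Real.sqrt (1 - p.1 ^ 2 - p.2 ^ 2))) ''
      (Icc (-a) a ×ˢ Icc (-c) c) =
    {p : ℝ × ℝ × ℝ | (p.1 ^ 2 + p.2.1 ^ 2 + p.2.2 ^ 2 = 1 ∧ |p.1| ≤ a ∧ |p.2.1| ≤ c) ∧
      0 < s * p.2.2} := by
  have hs2 : s ^ 2 = 1 := by rcases hs with rfl | rfl <;> norm_num
  ext ⟨pu, pv, pw⟩
  simp only [mem_image, mem_setOf_eq, Prod.mk.injEq, mem_prod, mem_Icc]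
  constructor
  · rintro ⟨⟨qu, qv⟩, ⟨hq1, hq2⟩, h1, h2, h3⟩
    simp only at h1 h2 h3
    subst h1; subst h2; subst h3
    have hu : |qu| ≤ a := abs_le.mpr hq1
    have hv : |qv| ≤ c := abs_le.mpr hq2
    have h1 : qu ^ 2 ≤ a ^ 2 := sq_le_of_abs hu
    have h2 : qv ^ 2 ≤ c ^ 2 := sq_le_of_abs hv
    have hpos : 0 < 1 - qu ^ 2 - qv ^ 2 := by nlinarith
    have hsq : Real.sqrt (1 - qu ^ 2 - qv ^ 2) ^ 2 = 1 - qu ^ 2 - qv ^ 2 :=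
      Real.sq_sqrt hpos.le
    have hsqpos : 0 < Real.sqrt (1 - qu ^ 2 - qv ^ 2) := Real.sqrt_pos.mpr hpos
    refine ⟨⟨by nlinarith, hu, hv⟩, ?_⟩
    calc 0 < Real.sqrt (1 - qu ^ 2 - qv ^ 2) := hsqpos
    _ = s ^ 2 * Real.sqrt (1 - qu ^ 2 - qv ^ 2) := by rw [hs2, one_mul]
    _ = s * (s * Real.sqrt (1 - qu ^ 2 - qv ^ 2)) := by ring
  · rintro ⟨⟨hsph, hu, hv⟩, hside⟩
    refine ⟨(pu, pv), ⟨abs_le.mp hu, abs_le.mp hv⟩, rfl, rfl, ?_⟩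
    have habs : |s| = 1 := by rcases hs with rfl | rfl <;> norm_num
    have hval : 1 - pu ^ 2 - pv ^ 2 = pw ^ 2 := by linarith
    calc s * Real.sqrt (1 - pu ^ 2 - pv ^ 2) = s * |pw| := by
          rw [hval, Real.sqrt_sq_eq_abs]
    _ = s * (s * pw) := by
          rw [← abs_of_pos hside, abs_mul, habs, one_mul]
    _ = pw := by rw [← mul_assoc, ← sq, hs2, one_mul]
  
/-- `1/√2` is a 0-essential critical value of `f₂ = |v|`
restricted to the lower level set `{|u| ≤ 1/√2}` of `f₁ = |u|` on the sphere.
Let `S` be the unit sphere in `ℝ³`.  For every `c` with `0 ≤ c < 1/√2`, the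
set `{(u,v,w) ∈ S : |u| ≤ 1/√2, |v| ≤ c}` has exactly two connected
components, while for every `c ≥ 1/√2` this set is connected. -/
theorem stmt_16 :
    (∀ c : ℝ, 0 ≤ c → c < 1 / Real.sqrt 2 →
      Nat.card (ConnectedComponents
        (↥{p : ℝ × ℝ × ℝ | p.1 ^ 2 + p.2.1 ^ 2 + p.2.2 ^ 2 = 1 ∧
            |p.1| ≤ 1 / Real.sqrt 2 ∧ |p.2.1| ≤ c})) = 2) ∧
    (∀ c : ℝ, 1 / Real.sqrt 2 ≤ c →
      IsConnected {p : ℝ × ℝ × ℝ | p.1 ^ 2 + p.2.1 ^ 2 + p.2.2 ^ 2 = 1 ∧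
        |p.1| ≤ 1 / Real.sqrt 2 ∧ |p.2.1| ≤ c}) := by
  constructor
  · intro c hc0 hc
    set a : ℝ := 1 / Real.sqrt 2 with ha
    set T : Set (ℝ × ℝ × ℝ) := {p : ℝ × ℝ × ℝ | p.1 ^ 2 + p.2.1 ^ 2 + p.2.2 ^ 2 = 1 ∧
        |p.1| ≤ a ∧ |p.2.1| ≤ c} with hT
    have ha2 : a ^ 2 = 1 / 2 := a_sq
    have hc2 : c ^ 2 < 1 / 2 := by nlinarith [a_pos]
    have hw : ∀ p ∈ T, p.2.2 ≠ 0 := by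
      rintro p ⟨hs, hu, hv⟩ h0
      have h1 : p.1 ^ 2 ≤ a ^ 2 := sq_le_of_abs hu
      have h2 : p.2.1 ^ 2 ≤ c ^ 2 := sq_le_of_abs hv
      rw [h0] at hs
      nlinarith
    have hpre : ∀ s : ℝ, s = 1 ∨ s = -1 →
        IsPreconnected {p : ℝ × ℝ × ℝ | p ∈ T ∧ 0 < s * p.2.2} := by
      intro s hs
      have : {p : ℝ × ℝ × ℝ | p ∈ T ∧ 0 < s * p.2.2} =
          (fun p : ℝ × ℝ => (p.1, p.2, s * Real.sqrt (1 - p.1 ^ 2 - p.2 ^ 2))) ''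
            (Icc (-a) a ×ˢ Icc (-c) c) := (himg_aux a c ha2 hc2 s hs).symm
      rw [this]
      exact (((convex_Icc _ _).prod (convex_Icc _ _)).isPreconnected).image _
        (gcont s).continuousOn
    set U : Set T := {x : T | 0 < (x : ℝ × ℝ × ℝ).2.2} with hU
    have hUopen : IsOpen U := by
      have h : U = Subtype.val ⁻¹' {p : ℝ × ℝ × ℝ | 0 < p.2.2} := rfl
      rw [h]
      exact (isOpen_lt continuous_const (by fun_prop)).preimage continuous_subtype_val
    have hUcomplopen : IsOpen Uᶜ := by
      have h : Uᶜ = Subtype.val ⁻¹' {p : ℝ × ℝ × ℝ | p.2.2 < 0} := by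
        ext x
        simp only [mem_compl_iff, hU, mem_setOf_eq, mem_preimage, not_lt]
        exact ⟨fun h => lt_of_le_of_ne h (hw _ x.2), le_of_lt⟩
      rw [h]
      exact (isOpen_lt (by fun_prop) continuous_const).preimage continuous_subtype_val
    have hUclopen : IsClopen U := ⟨isOpen_compl_iff.mp hUcomplopen, hUopen⟩
    have hfc : Continuous U.boolIndicator :=
      (continuous_boolIndicator_iff_isClopen U).mpr hUclopen
    have hvalU : Subtype.val '' U = {p : ℝ × ℝ × ℝ | p ∈ T ∧ 0 < (1:ℝ) * p.2.2} := by
      ext p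
      simp only [mem_image, mem_setOf_eq, one_mul]
      exact ⟨fun ⟨x, hx, hxp⟩ => hxp ▸ ⟨x.2, hx⟩, fun ⟨hpT, hp⟩ => ⟨⟨p, hpT⟩, hp, rfl⟩⟩
    have hvalUc : Subtype.val '' Uᶜ = {p : ℝ × ℝ × ℝ | p ∈ T ∧ 0 < (-1:ℝ) * p.2.2} := by
      ext p
      simp only [mem_image, mem_compl_iff, hU, mem_setOf_eq, neg_mul, one_mul, neg_pos,
        not_lt]
      constructor
      · rintro ⟨x, hx, rfl⟩
        exact ⟨x.2, lt_of_le_of_ne hx (hw _ x.2)⟩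
      · rintro ⟨hpT, hp⟩; exact ⟨⟨p, hpT⟩, hp.le, rfl⟩
    have hUpre : IsPreconnected U := by
      rw [← Topology.IsInducing.subtypeVal.isPreconnected_image, hvalU]
      exact hpre 1 (Or.inl rfl)
    have hUcpre : IsPreconnected Uᶜ := by
      rw [← Topology.IsInducing.subtypeVal.isPreconnected_image, hvalUc]
      exact hpre (-1) (Or.inr rfl)
    have hPmem : ((0:ℝ), (0:ℝ), (1:ℝ)) ∈ T := by
      refine ⟨by norm_num, ?_, ?_⟩
      · show |(0:ℝ)| ≤ a; rw [abs_zero]; exact a_pos.le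
      · show |(0:ℝ)| ≤ c; rwa [abs_zero]
    have hNmem : ((0:ℝ), (0:ℝ), (-1:ℝ)) ∈ T := by
      refine ⟨by norm_num, ?_, ?_⟩
      · show |(0:ℝ)| ≤ a; rw [abs_zero]; exact a_pos.le
      · show |(0:ℝ)| ≤ c; rwa [abs_zero]
    set P : T := ⟨_, hPmem⟩ with hP
    set N : T := ⟨_, hNmem⟩ with hN
    have hPU : P ∈ U := by show (0:ℝ) < 1; norm_num
    have hNU : N ∈ Uᶜ := by show ¬ (0:ℝ) < -1; norm_num
    have e : ConnectedComponents T ≃ Bool :=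
      { toFun := hfc.connectedComponentsLift
        invFun := fun b => cond b (ConnectedComponents.mk P) (ConnectedComponents.mk N)
        left_inv := by
          intro y
          obtain ⟨x, rfl⟩ := ConnectedComponents.surjective_coe y
          by_cases hx : x ∈ U
          · rw [hfc.connectedComponentsLift_apply_coe,
              (Set.mem_iff_boolIndicator U x).mp hx]
            exact ConnectedComponents.coe_eq_coe'.mpr (hUpre.subset_connectedComponent hx hPU)
          · have hfalse : U.boolIndicator x = false := by
              rcases Bool.eq_false_or_eq_true (U.boolIndicator x) with h | h
              · exact absurd ((Set.mem_iff_boolIndicator U x).mpr h) hx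
              · exact h
            rw [hfc.connectedComponentsLift_apply_coe, hfalse]
            exact ConnectedComponents.coe_eq_coe'.mpr (hUcpre.subset_connectedComponent hx hNU)
        right_inv := by
          intro b
          cases b
          · show hfc.connectedComponentsLift (ConnectedComponents.mk N) = false
            rw [show ConnectedComponents.mk N = (N : ConnectedComponents T) from rfl,
              hfc.connectedComponentsLift_apply_coe]
            rcases Bool.eq_false_or_eq_true (U.boolIndicator N) with h | h
            · exact absurd ((Set.mem_iff_boolIndicator U N).mpr h) hNU
            · exact h
          · show hfc.connectedComponentsLift (ConnectedComponents.mk P) = true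
            rw [show ConnectedComponents.mk P = (P : ConnectedComponents T) from rfl,
              hfc.connectedComponentsLift_apply_coe]
            exact (Set.mem_iff_boolIndicator U P).mp hPU }
    rw [Nat.card_congr e]
    simp
  · intro c hc
    set a : ℝ := 1 / Real.sqrt 2 with ha
    have ha2 : a ^ 2 = 1 / 2 := a_sq
    set K : Set (ℝ × ℝ) := {p : ℝ × ℝ | p.1 ^ 2 + p.2 ^ 2 ≤ 1} ∩ (Icc (-a) a ×ˢ Icc (-c) c)
      with hK
    have hKconv : Convex ℝ K := disk_convex.inter ((convex_Icc _ _).prod (convex_Icc _ _))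
    set g : ℝ → ℝ × ℝ → ℝ × ℝ × ℝ :=
      fun s p => (p.1, p.2, s * Real.sqrt (1 - p.1 ^ 2 - p.2 ^ 2)) with hg
    have himg : ∀ s : ℝ, s = 1 ∨ s = -1 → g s '' K ⊆
        {p : ℝ × ℝ × ℝ | p.1 ^ 2 + p.2.1 ^ 2 + p.2.2 ^ 2 = 1 ∧ |p.1| ≤ a ∧ |p.2.1| ≤ c} := by
      rintro s hs1 p ⟨⟨qu, qv⟩, ⟨hq0, hq1, hq2⟩, rfl⟩
      rw [mem_Icc] at hq1 hq2
      simp only [mem_setOf_eq] at hq0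
      have hpos : 0 ≤ 1 - qu ^ 2 - qv ^ 2 := by linarith
      have hsq : Real.sqrt (1 - qu ^ 2 - qv ^ 2) ^ 2 = 1 - qu ^ 2 - qv ^ 2 :=
        Real.sq_sqrt hpos
      refine ⟨?_, abs_le.mpr hq1, abs_le.mpr hq2⟩
      show qu ^ 2 + qv ^ 2 + (s * Real.sqrt (1 - qu ^ 2 - qv ^ 2)) ^ 2 = 1
      rcases hs1 with rfl | rfl <;> nlinarith
    have hcover : {p : ℝ × ℝ × ℝ | p.1 ^ 2 + p.2.1 ^ 2 + p.2.2 ^ 2 = 1 ∧ |p.1| ≤ a ∧ |p.2.1| ≤ c}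
        ⊆ g 1 '' K ∪ g (-1) '' K := by
      rintro ⟨pu, pv, pw⟩ ⟨hsph, hu, hv⟩
      simp only at hsph hu hv
      have hval : 1 - pu ^ 2 - pv ^ 2 = pw ^ 2 := by linarith
      have hKmem : ((pu, pv) : ℝ × ℝ) ∈ K := by
        refine ⟨?_, mem_Icc.mpr (abs_le.mp hu), mem_Icc.mpr (abs_le.mp hv)⟩
        show pu ^ 2 + pv ^ 2 ≤ 1
        nlinarith [sq_nonneg pw]
      rcases le_or_gt 0 pw with h | h
      · left
        refine ⟨(pu, pv), hKmem, ?_⟩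
        show ((pu, pv, 1 * Real.sqrt (1 - pu ^ 2 - pv ^ 2)) : ℝ × ℝ × ℝ) = (pu, pv, pw)
        rw [hval, one_mul, Real.sqrt_sq h]
      · right
        refine ⟨(pu, pv), hKmem, ?_⟩
        show ((pu, pv, (-1) * Real.sqrt (1 - pu ^ 2 - pv ^ 2)) : ℝ × ℝ × ℝ) = (pu, pv, pw)
        rw [hval, Real.sqrt_sq_eq_abs, abs_of_neg h]
        norm_num
    have hcommon : ((a, a, (0:ℝ)) : ℝ × ℝ × ℝ) ∈ g 1 '' K ∩ g (-1) '' K := by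
      have haK : ((a, a) : ℝ × ℝ) ∈ K := by
        refine ⟨?_, ?_, ?_⟩
        · show a ^ 2 + a ^ 2 ≤ 1; rw [ha2]; norm_num
        · exact mem_Icc.mpr ⟨by linarith [a_pos], le_refl a⟩
        · exact mem_Icc.mpr ⟨by linarith [a_pos], hc⟩
      have hz : Real.sqrt (1 - a ^ 2 - a ^ 2) = 0 := by
        rw [ha2]; norm_num
      constructor
      · refine ⟨(a, a), haK, ?_⟩
        show ((a, a, 1 * Real.sqrt (1 - a ^ 2 - a ^ 2)) : ℝ × ℝ × ℝ) = (a, a, 0)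
        rw [hz]; norm_num
      · refine ⟨(a, a), haK, ?_⟩
        show ((a, a, (-1) * Real.sqrt (1 - a ^ 2 - a ^ 2)) : ℝ × ℝ × ℝ) = (a, a, 0)
        rw [hz]; norm_num
    have hset : {p : ℝ × ℝ × ℝ | p.1 ^ 2 + p.2.1 ^ 2 + p.2.2 ^ 2 = 1 ∧ |p.1| ≤ a ∧ |p.2.1| ≤ c}
        = g 1 '' K ∪ g (-1) '' K :=
      Subset.antisymm hcover (union_subset (himg 1 (Or.inl rfl)) (himg (-1) (Or.inr rfl)))
    rw [hset]
    refine ⟨⟨(a, a, 0), Or.inl hcommon.1⟩, ?_⟩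
    exact IsPreconnected.union (a, a, 0) hcommon.1 hcommon.2
      ((hKconv.isPreconnected).image _ (gcont 1).continuousOn)
      ((hKconv.isPreconnected).image _ (gcont (-1)).continuousOn)
end
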